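/- arXiv:2010.13076 — 8 statements merged into one kernel-verified Lean document; each statement's English description precedes it below -/
import Mathlib

section
/- Let $\Theta_i,\Theta_j,\Theta_k \in (0,\pi)$ satisfy $\Theta_i+\Theta_j+\Theta_k > \pi$, $\Theta_i+\Theta_j < \Theta_k+\pi$, $\Theta_j+\Theta_k < \Theta_i+\pi$, $\Theta_k+\Theta_i < \Theta_j+\pi$. Then for all $r_i,r_j,r_k \in (0,\pi)$, setting $x_\mu = \sin r_\mu$, $a_\mu = \cos r_\mu$ and $\lambda_{ijk} = \cos\Theta_i + \cos\Theta_j\cos\Theta_k$ (and cyclically), the inequality $\sin^2\Theta_i\, x_j^2 x_k^2 + \sin^2\Theta_j\, x_k^2 x_i^2 + \sin^2\Theta_k\, x_i^2 x_j^2 - (2+2\cos\Theta_i\cos\Theta_j\cos\Theta_k) x_i^2 x_j^2 x_k^2 + 2\lambda_{ijk} a_j a_k x_j x_k x_i^2 + 2\lambda_{jki} a_k a_i x_k x_i x_j^2 + 2\lambda_{kij} a_i a_j x_i x_j x_k^2 > 0$ holds. -/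
open Real

set_option maxHeartbeats 1600000

/-- Key algebraic inequality (2.1) for spherical three-circle configurations. -/
theorem spherical_three_circle_inequality
    (Θi Θj Θk ri rj rk : ℝ)
    (hΘi : Θi ∈ Set.Ioo 0 π) (hΘj : Θj ∈ Set.Ioo 0 π) (hΘk : Θk ∈ Set.Ioo 0 π)
    (hsum : π < Θi + Θj + Θk)
    (h1 : Θi + Θj < Θk + π) (h2 : Θj + Θk < Θi + π) (h3 : Θk + Θi < Θj + π)
    (hri : ri ∈ Set.Ioo 0 π) (hrj : rj ∈ Set.Ioo 0 π) (hrk : rk ∈ Set.Ioo 0 π) :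
    0 < sin Θi ^ 2 * sin rj ^ 2 * sin rk ^ 2
      + sin Θj ^ 2 * sin rk ^ 2 * sin ri ^ 2
      + sin Θk ^ 2 * sin ri ^ 2 * sin rj ^ 2
      - (2 + 2 * cos Θi * cos Θj * cos Θk) * (sin ri ^ 2 * sin rj ^ 2 * sin rk ^ 2)
      + 2 * (cos Θi + cos Θj * cos Θk) * cos rj * cos rk * sin rj * sin rk * sin ri ^ 2
      + 2 * (cos Θj + cos Θk * cos Θi) * cos rk * cos ri * sin rk * sin ri * sin rj ^ 2
      + 2 * (cos Θk + cos Θi * cos Θj) * cos ri * cos rj * sin ri * sin rj * sin rk ^ 2 := by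
  obtain ⟨hΘi0, hΘip⟩ := hΘi
  obtain ⟨hΘj0, hΘjp⟩ := hΘj
  obtain ⟨hΘk0, hΘkp⟩ := hΘk
  have hpi := Real.pi_pos
  have hxi : 0 < sin ri := Real.sin_pos_of_pos_of_lt_pi hri.1 hri.2
  have hxj : 0 < sin rj := Real.sin_pos_of_pos_of_lt_pi hrj.1 hrj.2
  have hxk : 0 < sin rk := Real.sin_pos_of_pos_of_lt_pi hrk.1 hrk.2
  have hsi : 0 < sin Θi := Real.sin_pos_of_pos_of_lt_pi hΘi0 hΘip
  have hsi2 : 0 < 1 - cos Θi ^ 2 := by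
    have := sin_sq_add_cos_sq Θi; nlinarith [hsi]
  -- Factor A : sin Θi * sin Θj + (cos Θk + cos Θi * cos Θj) > 0
  have habs : |Θi - Θj| < π - Θk := by
    rw [abs_sub_lt_iff]; constructor <;> linarith
  have hcosab := Real.cos_lt_cos_of_nonneg_of_le_pi (abs_nonneg (Θi - Θj))
    (by linarith : π - Θk ≤ π) habs
  rw [Real.cos_abs, Real.cos_pi_sub, Real.cos_sub] at hcosab
  have hA : 0 < sin Θi * sin Θj + (cos Θk + cos Θi * cos Θj) := by linarith
  -- Factor B : sin Θi * sin Θj - (cos Θk + cos Θi * cos Θj) > 0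
  have hc1 : cos ((Θi + Θj + Θk) / 2) < 0 := by
    have hpos : 0 < cos (π - (Θi + Θj + Θk) / 2) :=
      Real.cos_pos_of_mem_Ioo ⟨by linarith, by linarith⟩
    rw [Real.cos_pi_sub] at hpos; linarith
  have hc2 : 0 < cos ((Θi + Θj - Θk) / 2) :=
    Real.cos_pos_of_mem_Ioo ⟨by linarith, by linarith⟩
  have hB : 0 < sin Θi * sin Θj - (cos Θk + cos Θi * cos Θj) := by
    have hsum2 : cos (Θi + Θj) + cos Θk =
        2 * cos ((Θi + Θj + Θk) / 2) * cos ((Θi + Θj - Θk) / 2) := by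
      rw [Real.cos_add_cos]
    have hmul : 2 * cos ((Θi + Θj + Θk) / 2) * cos ((Θi + Θj - Θk) / 2) < 0 := by
      nlinarith
    rw [Real.cos_add] at hsum2
    linarith
  -- D > 0
  have hDval : 1 - cos Θi ^ 2 - cos Θj ^ 2 - cos Θk ^ 2 - 2 * cos Θi * cos Θj * cos Θk =
      (sin Θi * sin Θj + (cos Θk + cos Θi * cos Θj)) *
      (sin Θi * sin Θj - (cos Θk + cos Θi * cos Θj)) := by
    linear_combination (-(sin Θj ^ 2)) * sin_sq_add_cos_sq Θi +
      (cos Θi ^ 2 - 1) * sin_sq_add_cos_sq Θj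
  have hD : 0 < 1 - cos Θi ^ 2 - cos Θj ^ 2 - cos Θk ^ 2 - 2 * cos Θi * cos Θj * cos Θk := by
    rw [hDval]; exact mul_pos hA hB
  -- abbreviations
  set D : ℝ := 1 - cos Θi ^ 2 - cos Θj ^ 2 - cos Θk ^ 2 - 2 * cos Θi * cos Θj * cos Θk with hDdef
  set A1 : ℝ := (1 - cos Θi ^ 2) * cos ri * sin rj * sin rk
      + (cos Θk + cos Θi * cos Θj) * cos rj * sin ri * sin rk
      + (cos Θj + cos Θk * cos Θi) * cos rk * sin ri * sin rj with hA1
  set B1 : ℝ := cos rj * sin ri * sin rk + cos Θi * cos rk * sin ri * sin rj with hB1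
  -- the key algebraic identity
  have key : (1 - cos Θi ^ 2) * (sin Θi ^ 2 * sin rj ^ 2 * sin rk ^ 2
      + sin Θj ^ 2 * sin rk ^ 2 * sin ri ^ 2
      + sin Θk ^ 2 * sin ri ^ 2 * sin rj ^ 2
      - (2 + 2 * cos Θi * cos Θj * cos Θk) * (sin ri ^ 2 * sin rj ^ 2 * sin rk ^ 2)
      + 2 * (cos Θi + cos Θj * cos Θk) * cos rj * cos rk * sin rj * sin rk * sin ri ^ 2
      + 2 * (cos Θj + cos Θk * cos Θi) * cos rk * cos ri * sin rk * sin ri * sin rj ^ 2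
      + 2 * (cos Θk + cos Θi * cos Θj) * cos ri * cos rj * sin ri * sin rj * sin rk ^ 2)
      = A1 ^ 2 + D * B1 ^ 2 + D * (1 - cos Θi ^ 2) * (cos rk * sin ri * sin rj) ^ 2
        + D * (1 - cos Θi ^ 2) * (sin ri * sin rj * sin rk) ^ 2 := by
    simp only [hA1, hB1, hDdef]
    linear_combination (sin rj^2 * sin rk^2 + (-1) * cos Θi^2 * sin rj^2 * sin rk^2) * sin_sq_add_cos_sq Θi + (sin ri^2 * sin rk^2 + (-1) * cos Θi^2 * sin ri^2 * sin rk^2) * sin_sq_add_cos_sq Θj + (sin ri^2 * sin rj^2 + (-1) * cos Θi^2 * sin ri^2 * sin rj^2) * sin_sq_add_cos_sq Θk + (sin rk^2 + (-1) * sin rk^2 * cos rj^2 + sin rj^2 + (-1) * sin rj^2 * cos rk^2 + (-3) * sin rj^2 * sin rk^2 + (-1) * cos Θk^2 * sin rj^2 + cos Θk^2 * sin rj^2 * cos rk^2 + cos Θk^2 * sin rj^2 * sin rk^2 + (-1) * cos Θj^2 * sin rk^2 + cos Θj^2 * sin rk^2 * cos rj^2 + cos Θj^2 * sin rj^2 *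 sin rk^2 + (-1) * cos Θi^2 * sin rk^2 + cos Θi^2 * sin rk^2 * cos rj^2 + (-1) * cos Θi^2 * sin rj^2 + cos Θi^2 * sin rj^2 * cos rk^2 + (4) * cos Θi^2 * sin rj^2 * sin rk^2 + cos Θi^2 * cos Θk^2 * sin rj^2 + (-1) * cos Θi^2 * cos Θk^2 * sin rj^2 * cos rk^2 + (-1) * cos Θi^2 * cos Θk^2 * sin rj^2 * sin rk^2 + cos Θi^2 * cos Θj^2 * sin rk^2 + (-1) * cos Θi^2 * cos Θj^2 * sin rk^2 * cos rj^2 + (-1) * cos Θi^2 * cos Θj^2 * sin rj^2 * sin rk^2 + (-1) * cos Θi^4 * sin rj^2 * sin rk^2) * sin_sq_add_cos_sq ri + ((1) + (-1) * cos rk^2 + (-1) * cos ri^2 + cos ri^2 * cos rk^2 + (-2) * sin rk^2 + (2) * sin rk^2 * cos ri^2 + (-1) * cos Θk^2 + cos Θk^2 * cos rk^2 + cos Θk^2 * cos ri^2 + (-1) * cos Θk^2 * cos ri^2 * cos rk^2 + cos Θk^2 * sin rk^2 + (-1) * cos Θk^2 * sin rk^2 * cos ri^2 + cos Θj^2 *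 sin rk^2 + (-1) * cos Θj^2 * sin rk^2 * cos ri^2 + (-1) * cos Θi^2 + cos Θi^2 * cos rk^2 + cos Θi^2 * cos ri^2 + (-1) * cos Θi^2 * cos ri^2 * cos rk^2 + (2) * cos Θi^2 * sin rk^2 + (-2) * cos Θi^2 * sin rk^2 * cos ri^2 + cos Θi^2 * cos Θk^2 + (-1) * cos Θi^2 * cos Θk^2 * cos rk^2 + (-1) * cos Θi^2 * cos Θk^2 * cos ri^2 + cos Θi^2 * cos Θk^2 * cos ri^2 * cos rk^2 + (-1) * cos Θi^2 * cos Θk^2 * sin rk^2 + cos Θi^2 * cos Θk^2 * sin rk^2 * cos ri^2 + (-1) * cos Θi^2 * cos Θj^2 * sin rk^2 + cos Θi^2 * cos Θj^2 * sin rk^2 * cos ri^2) * sin_sq_add_cos_sq rj + ((-1) + cos rj^2 + cos ri^2 + (-1) * cos ri^2 * cos rj^2 + cos Θk^2 + (-1) * cos Θk^2 * cos rj^2 + (-1) * cos Θk^2 * cos ri^2 + cos Θk^2 * cos ri^2 * cos rj^2 + cos Θi^2 + (-1) * cos Θi^2 * cos rj^2 + (-1) * cos Θi^2 * cos ri^2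 + cos Θi^2 * cos ri^2 * cos rj^2 + (-1) * cos Θi^2 * cos Θk^2 + cos Θi^2 * cos Θk^2 * cos rj^2 + cos Θi^2 * cos Θk^2 * cos ri^2 + (-1) * cos Θi^2 * cos Θk^2 * cos ri^2 * cos rj^2) * sin_sq_add_cos_sq rk
  have hterm : 0 < D * (1 - cos Θi ^ 2) * (sin ri * sin rj * sin rk) ^ 2 := by positivity
  have hterm2 : 0 ≤ D * (1 - cos Θi ^ 2) * (cos rk * sin ri * sin rj) ^ 2 := by positivity
  have hterm3 : 0 ≤ D * B1 ^ 2 := by positivity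
  have hpos : 0 < (1 - cos Θi ^ 2) * (sin Θi ^ 2 * sin rj ^ 2 * sin rk ^ 2
      + sin Θj ^ 2 * sin rk ^ 2 * sin ri ^ 2
      + sin Θk ^ 2 * sin ri ^ 2 * sin rj ^ 2
      - (2 + 2 * cos Θi * cos Θj * cos Θk) * (sin ri ^ 2 * sin rj ^ 2 * sin rk ^ 2)
      + 2 * (cos Θi + cos Θj * cos Θk) * cos rj * cos rk * sin rj * sin rk * sin ri ^ 2
      + 2 * (cos Θj + cos Θk * cos Θi) * cos rk * cos ri * sin rk * sin ri * sin rj ^ 2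
      + 2 * (cos Θk + cos Θi * cos Θj) * cos ri * cos rj * sin ri * sin rj * sin rk ^ 2) := by
    rw [key]
    have := sq_nonneg A1
    linarith
  nlinarith [hpos, hsi2]
end

section
/- Let $\Theta_i, \Theta_j, \Theta_k \in [0,\pi)$ satisfy either $\Theta_i+\Theta_j+\Theta_k \le \pi$, or the three inequalities $\Theta_i+\Theta_j < \Theta_k+\pi$, $\Theta_j+\Theta_k < \Theta_i+\pi$, $\Theta_k+\Theta_i < \Theta_j+\pi$. Then for all positive reals $r_i, r_j, r_k$, the numbers $l_i = \sqrt{r_j^2 + r_k^2 + 2\cos\Theta_i\, r_j r_k}$, $l_j = \sqrt{r_k^2 + r_i^2 + 2\cos\Theta_j\, r_k r_i}$, $l_k = \sqrt{r_i^2 + r_j^2 + 2\cos\Theta_k\, r_i r_j}$ satisfy the strict triangle inequalities: $l_i + l_j > l_k$, $l_j + l_k > l_i$, $l_k + l_i > l_j$. -/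
open Real

private lemma expr_pos {θ r s : ℝ} (hθ : θ ∈ Set.Ico 0 π) (hr : 0 < r) (hs : 0 < s) :
    0 < r ^ 2 + s ^ 2 + 2 * cos θ * r * s := by
  have h1 : Real.cos π < Real.cos θ :=
    Real.cos_lt_cos_of_nonneg_of_le_pi hθ.1 le_rfl hθ.2
  rw [Real.cos_pi] at h1
  nlinarith [sq_nonneg (r - s), mul_pos hr hs]

private lemma tri_aux {X Y Z : ℝ} (hX : 0 < X) (hY : 0 < Y) (hZ : 0 ≤ Z)
    (h : Z < X + Y + 2 * Real.sqrt X * Real.sqrt Y) :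
    Real.sqrt Z < Real.sqrt X + Real.sqrt Y := by
  have hx := Real.sqrt_pos.mpr hX
  have hy := Real.sqrt_pos.mpr hY
  rw [Real.sqrt_lt' (by positivity)]
  nlinarith [Real.sq_sqrt hX.le, Real.sq_sqrt hY.le]

private lemma tri_of_Q {X Y Z : ℝ} (hX : 0 < X) (hY : 0 < Y) (hZ : 0 ≤ Z)
    (hQ : 0 < 2*X*Y + 2*Y*Z + 2*Z*X - X^2 - Y^2 - Z^2) :
    Real.sqrt Z < Real.sqrt X + Real.sqrt Y := by
  apply tri_aux hX hY hZ
  have hx := Real.sqrt_pos.mpr hX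
  have hy := Real.sqrt_pos.mpr hY
  have hx2 := Real.sq_sqrt hX.le
  have hy2 := Real.sq_sqrt hY.le
  nlinarith [mul_pos hx hy, sq_nonneg (Z - X - Y - 2 * Real.sqrt X * Real.sqrt Y),
    sq_nonneg (Z - X - Y + 2 * Real.sqrt X * Real.sqrt Y)]

private lemma key2 (A B C ri rj rk : ℝ) (hri : 0 < ri) (hrj : 0 < rj)
    (hX : 0 < rj ^ 2 + rk ^ 2 + 2 * cos A * rj * rk)
    (hY : 0 < rk ^ 2 + ri ^ 2 + 2 * cos B * rk * ri)
    (hZ : 0 ≤ ri ^ 2 + rj ^ 2 + 2 * cos C * ri * rj)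
    (h : cos C + cos (A + B) < 0) :
    Real.sqrt (ri ^ 2 + rj ^ 2 + 2 * cos C * ri * rj)
      < Real.sqrt (rj ^ 2 + rk ^ 2 + 2 * cos A * rj * rk)
        + Real.sqrt (rk ^ 2 + ri ^ 2 + 2 * cos B * rk * ri) := by
  set X := rj ^ 2 + rk ^ 2 + 2 * cos A * rj * rk with hXdef
  set Y := rk ^ 2 + ri ^ 2 + 2 * cos B * rk * ri with hYdef
  set R : ℝ := rk^2 + cos A * rj * rk + cos B * rk * ri
      + (cos A * cos B - sin A * sin B) * ri * rj with hRdef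
  set I : ℝ := sin B * ri * rk + sin A * rj * rk
      + (sin A * cos B + cos A * sin B) * ri * rj with hIdef
  have hXY : X * Y = R ^ 2 + I ^ 2 := by
    rw [hXdef, hYdef, hRdef, hIdef]
    linear_combination (-(rj^2*rk^2) - 2*ri*rj^2*rk*cos B - ri^2*rj^2*(sin B)^2
        - ri^2*rj^2*(cos B)^2) * Real.sin_sq_add_cos_sq A
      + (-(ri^2*rk^2) - 2*ri^2*rj*rk*cos A - ri^2*rj^2) * Real.sin_sq_add_cos_sq B
  have h1 : Real.sqrt X * Real.sqrt Y = Real.sqrt (R ^ 2 + I ^ 2) := by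
    rw [← Real.sqrt_mul hX.le, hXY]
  have h2 : -R ≤ Real.sqrt (R ^ 2 + I ^ 2) := by
    calc -R ≤ |R| := neg_le_abs R
    _ = Real.sqrt (R ^ 2) := (Real.sqrt_sq_eq_abs R).symm
    _ ≤ Real.sqrt (R ^ 2 + I ^ 2) := Real.sqrt_le_sqrt (by nlinarith [sq_nonneg I])
  apply tri_aux hX hY hZ
  have h3 : (ri ^ 2 + rj ^ 2 + 2 * cos C * ri * rj) - X - Y + 2 * R
      = 2 * (cos C + cos (A + B)) * ri * rj := by
    rw [Real.cos_add, hXdef, hYdef, hRdef]; ring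
  have h4 : 2 * (cos C + cos (A + B)) * ri * rj < 0 := by
    have := mul_pos hri hrj
    nlinarith
  rw [← h1] at h2
  linarith

set_option maxHeartbeats 1600000 in
private lemma Qpos (A B C ri rj rk : ℝ)
    (hA : A ∈ Set.Ico 0 π) (hB : B ∈ Set.Ico 0 π) (hC : C ∈ Set.Ico 0 π)
    (hsum : A + B + C ≤ π) (hri : 0 < ri) (hrj : 0 < rj) (hrk : 0 < rk) :
    0 < 2*(rj^2 + rk^2 + 2*cos A*rj*rk)*(rk^2 + ri^2 + 2*cos B*rk*ri)
      + 2*(rk^2 + ri^2 + 2*cos B*rk*ri)*(ri^2 + rj^2 + 2*cos C*ri*rj)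
      + 2*(ri^2 + rj^2 + 2*cos C*ri*rj)*(rj^2 + rk^2 + 2*cos A*rj*rk)
      - (rj^2 + rk^2 + 2*cos A*rj*rk)^2 - (rk^2 + ri^2 + 2*cos B*rk*ri)^2
      - (ri^2 + rj^2 + 2*cos C*ri*rj)^2 := by
  have hπ := Real.pi_pos
  have hu : (0:ℝ) < rj * rk := mul_pos hrj hrk
  have hv : (0:ℝ) < ri * rk := mul_pos hri hrk
  have hw : (0:ℝ) < ri * rj := mul_pos hri hrj
  have hid : 2*(rj^2 + rk^2 + 2*cos A*rj*rk)*(rk^2 + ri^2 + 2*cos B*rk*ri)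
      + 2*(rk^2 + ri^2 + 2*cos B*rk*ri)*(ri^2 + rj^2 + 2*cos C*ri*rj)
      + 2*(ri^2 + rj^2 + 2*cos C*ri*rj)*(rj^2 + rk^2 + 2*cos A*rj*rk)
      - (rj^2 + rk^2 + 2*cos A*rj*rk)^2 - (rk^2 + ri^2 + 2*cos B*rk*ri)^2
      - (ri^2 + rj^2 + 2*cos C*ri*rj)^2
      = 4*((rj*rk)*sin A + (ri*rk)*sin B + (ri*rj)*sin C)^2
        + 8*(rj*rk)*(ri*rk)*(cos C + cos (A+B))
        + 8*(rj*rk)*(ri*rj)*(cos B + cos (A+C))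
        + 8*(ri*rk)*(ri*rj)*(cos A + cos (B+C)) := by
    rw [Real.cos_add, Real.cos_add, Real.cos_add]
    linear_combination (-4*rj^2*rk^2) * Real.sin_sq_add_cos_sq A
      + (-4*ri^2*rk^2) * Real.sin_sq_add_cos_sq B
      + (-4*ri^2*rj^2) * Real.sin_sq_add_cos_sq C
  rw [hid]
  have key : ∀ x y z : ℝ, x ∈ Set.Ico 0 π → y ∈ Set.Ico 0 π → z ∈ Set.Ico 0 π →
      x + y + z ≤ π → 0 ≤ cos z + cos (x + y) := by
    intro x y z hx hy hz hs
    rw [Real.cos_add_cos]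
    apply mul_nonneg
    · apply mul_nonneg (by norm_num)
      apply Real.cos_nonneg_of_mem_Icc
      constructor <;> [nlinarith [hx.1, hy.1, hz.1]; nlinarith]
    · apply Real.cos_nonneg_of_mem_Icc
      constructor <;> [nlinarith [hz.1]; nlinarith [hz.2, hx.1, hy.1]]
  rcases lt_or_eq_of_le hsum with hlt | heq
  · have key' : ∀ x y z : ℝ, x ∈ Set.Ico 0 π → y ∈ Set.Ico 0 π → z ∈ Set.Ico 0 π →
        x + y + z < π → 0 < cos z + cos (x + y) := by
      intro x y z hx hy hz hs
      rw [Real.cos_add_cos]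
      apply mul_pos
      · apply mul_pos (by norm_num)
        apply Real.cos_pos_of_mem_Ioo
        constructor <;> [nlinarith [hx.1, hy.1, hz.1]; nlinarith]
      · apply Real.cos_pos_of_mem_Ioo
        constructor <;> [nlinarith [hz.1]; nlinarith [hz.2, hx.1, hy.1]]
    have c1 := key' A B C hA hB hC hlt
    have c2 := key' A C B hA hC hB (by linarith)
    have c3 := key' B C A hB hC hA (by linarith)
    nlinarith [sq_nonneg ((rj*rk)*sin A + (ri*rk)*sin B + (ri*rj)*sin C),
      mul_pos (mul_pos hu hv) c1, mul_pos (mul_pos hu hw) c2,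
      mul_pos (mul_pos hv hw) c3]
  · have c1 := key A B C hA hB hC hsum
    have c2 := key A C B hA hC hB (by linarith)
    have c3 := key B C A hB hC hA (by linarith)
    have hs : 0 < (rj*rk)*sin A + (ri*rk)*sin B + (ri*rj)*sin C := by
      have sA := Real.sin_nonneg_of_nonneg_of_le_pi hA.1 hA.2.le
      have sB := Real.sin_nonneg_of_nonneg_of_le_pi hB.1 hB.2.le
      have sC := Real.sin_nonneg_of_nonneg_of_le_pi hC.1 hC.2.le
      have hone : 0 < A ∨ 0 < B ∨ 0 < C := by
        by_contra hcon
        push_neg at hcon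
        have : A = 0 := le_antisymm hcon.1 hA.1
        have : B = 0 := le_antisymm hcon.2.1 hB.1
        have : C = 0 := le_antisymm hcon.2.2 hC.1
        simp_all
      rcases hone with h | h | h
      · have := Real.sin_pos_of_pos_of_lt_pi h hA.2
        nlinarith
      · have := Real.sin_pos_of_pos_of_lt_pi h hB.2
        nlinarith
      · have := Real.sin_pos_of_pos_of_lt_pi h hC.2
        nlinarith
    nlinarith [mul_nonneg (mul_pos hu hv).le c1, mul_nonneg (mul_pos hu hw).le c2,
      mul_nonneg (mul_pos hv hw).le c3, sq_nonneg ((rj*rk)*sin A + (ri*rk)*sin B + (ri*rj)*sin C),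
      mul_pos hs hs]

set_option maxHeartbeats 800000 in
/-- Euclidean three-circle configurations: the center distances `l_i, l_j, l_k`
given by the Euclidean law of cosines satisfy the strict triangle inequalities. -/
theorem euclidean_three_circle_triangle_ineq
    (Θi Θj Θk ri rj rk : ℝ)
    (hΘi : Θi ∈ Set.Ico 0 π) (hΘj : Θj ∈ Set.Ico 0 π) (hΘk : Θk ∈ Set.Ico 0 π)
    (hcond : Θi + Θj + Θk ≤ π ∨
      (Θi + Θj < Θk + π ∧ Θj + Θk < Θi + π ∧ Θk + Θi < Θj + π))
    (hri : 0 < ri) (hrj : 0 < rj) (hrk : 0 < rk) :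
    Real.sqrt (ri ^ 2 + rj ^ 2 + 2 * cos Θk * ri * rj)
        < Real.sqrt (rj ^ 2 + rk ^ 2 + 2 * cos Θi * rj * rk)
          + Real.sqrt (rk ^ 2 + ri ^ 2 + 2 * cos Θj * rk * ri) ∧
    Real.sqrt (rj ^ 2 + rk ^ 2 + 2 * cos Θi * rj * rk)
        < Real.sqrt (rk ^ 2 + ri ^ 2 + 2 * cos Θj * rk * ri)
          + Real.sqrt (ri ^ 2 + rj ^ 2 + 2 * cos Θk * ri * rj) ∧
    Real.sqrt (rk ^ 2 + ri ^ 2 + 2 * cos Θj * rk * ri)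
        < Real.sqrt (ri ^ 2 + rj ^ 2 + 2 * cos Θk * ri * rj)
          + Real.sqrt (rj ^ 2 + rk ^ 2 + 2 * cos Θi * rj * rk) := by
  have hπ := Real.pi_pos
  have hX : 0 < rj ^ 2 + rk ^ 2 + 2 * cos Θi * rj * rk := expr_pos hΘi hrj hrk
  have hY : 0 < rk ^ 2 + ri ^ 2 + 2 * cos Θj * rk * ri := expr_pos hΘj hrk hri
  have hZ : 0 < ri ^ 2 + rj ^ 2 + 2 * cos Θk * ri * rj := expr_pos hΘk hri hrj
  rcases le_or_gt (Θi + Θj + Θk) π with hs | hs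
  · have hQ := Qpos Θi Θj Θk ri rj rk hΘi hΘj hΘk hs hri hrj hrk
    set X := rj ^ 2 + rk ^ 2 + 2 * cos Θi * rj * rk
    set Y := rk ^ 2 + ri ^ 2 + 2 * cos Θj * rk * ri
    set Z := ri ^ 2 + rj ^ 2 + 2 * cos Θk * ri * rj
    have hQ1 : 0 < 2*X*Y + 2*Y*Z + 2*Z*X - X^2 - Y^2 - Z^2 := by
      have e : 2*X*Y + 2*Y*Z + 2*Z*X - X^2 - Y^2 - Z^2
          = 2*X*Y + 2*Y*Z + 2*Z*X - X^2 - Y^2 - Z^2 := rfl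
      exact hQ
    have hQ2 : 0 < 2*Y*Z + 2*Z*X + 2*X*Y - Y^2 - Z^2 - X^2 := by linarith
    have hQ3 : 0 < 2*Z*X + 2*X*Y + 2*Y*Z - Z^2 - X^2 - Y^2 := by linarith
    exact ⟨tri_of_Q hX hY hZ.le hQ1, tri_of_Q hY hZ hX.le hQ2, tri_of_Q hZ hX hY.le hQ3⟩
  · have hc : Θi + Θj < Θk + π ∧ Θj + Θk < Θi + π ∧ Θk + Θi < Θj + π := by
      rcases hcond with h | h
      · linarith
      · exact h
    have hneg : ∀ x y z : ℝ, x ∈ Set.Ico 0 π → y ∈ Set.Ico 0 π → z ∈ Set.Ico 0 π →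
        π < x + y + z → x + y < z + π → cos z + cos (x + y) < 0 := by
      intro x y z hx hy hz h1 h2
      rw [Real.cos_add_cos]
      apply mul_neg_of_neg_of_pos
      · apply mul_neg_of_pos_of_neg (by norm_num)
        apply Real.cos_neg_of_pi_div_two_lt_of_lt
        · linarith
        · nlinarith [hx.2, hy.2, hz.2]
      · apply Real.cos_pos_of_mem_Ioo
        constructor
        · nlinarith
        · nlinarith [hz.2, hx.1, hy.1]
    refine ⟨key2 Θi Θj Θk ri rj rk hri hrj hX hY hZ.le
        (hneg Θi Θj Θk hΘi hΘj hΘk hs hc.1),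
      key2 Θj Θk Θi rj rk ri hrj hrk hY hZ hX.le
        (hneg Θj Θk Θi hΘj hΘk hΘi (by linarith) (by linarith [hc.2.1])),
      key2 Θk Θi Θj rk ri rj hrk hri hZ hX hY.le
        (hneg Θk Θi Θj hΘk hΘi hΘj (by linarith) (by linarith [hc.2.2]))⟩
end

section
/- Let $\Theta_i, \Theta_j, \Theta_k \in [0,\pi)$ with $\Theta_i+\Theta_j+\Theta_k \le \pi$, and let $r_i, r_j, r_k > 0$. Setting $\lambda_{ijk} = \cos\Theta_i + \cos\Theta_j\cos\Theta_k$ and cyclically, one has $\sin^2\Theta_i\, r_j^2 r_k^2 + \sin^2\Theta_j\, r_k^2 r_i^2 + \sin^2\Theta_k\, r_i^2 r_j^2 + 2\lambda_{ijk} r_j r_k r_i^2 + 2\lambda_{jki} r_k r_i r_j^2 + 2\lambda_{kij} r_i r_j r_k^2 > 0$. -/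
open Real

lemma lam_ge_aux (x y z : ℝ) (hx : x ∈ Set.Ico 0 π) (hy : y ∈ Set.Ico 0 π)
    (hz : z ∈ Set.Ico 0 π) (hsum : x + y + z ≤ π) :
    Real.sin y * Real.sin z ≤ Real.cos x + Real.cos y * Real.cos z := by
  have h1 : Real.cos (π - (y + z)) ≤ Real.cos x :=
    Real.cos_le_cos_of_nonneg_of_le_pi hx.1 (by linarith [hy.1, hz.1]) (by linarith)
  rw [Real.cos_pi_sub, Real.cos_add] at h1
  linarith

/-- Inequality (2.4) in the Euclidean three-circle configuration lemma. -/
theorem euclidean_three_circle_positivity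
    (Θi Θj Θk ri rj rk : ℝ)
    (hΘi : Θi ∈ Set.Ico 0 π) (hΘj : Θj ∈ Set.Ico 0 π) (hΘk : Θk ∈ Set.Ico 0 π)
    (hsum : Θi + Θj + Θk ≤ π)
    (hri : 0 < ri) (hrj : 0 < rj) (hrk : 0 < rk) :
    0 < sin Θi ^ 2 * rj ^ 2 * rk ^ 2 + sin Θj ^ 2 * rk ^ 2 * ri ^ 2
      + sin Θk ^ 2 * ri ^ 2 * rj ^ 2
      + 2 * (cos Θi + cos Θj * cos Θk) * rj * rk * ri ^ 2
      + 2 * (cos Θj + cos Θk * cos Θi) * rk * ri * rj ^ 2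
      + 2 * (cos Θk + cos Θi * cos Θj) * ri * rj * rk ^ 2 := by
  have hl1 := lam_ge_aux Θi Θj Θk hΘi hΘj hΘk hsum
  have hl2 := lam_ge_aux Θj Θk Θi hΘj hΘk hΘi (by linarith)
  have hl3 := lam_ge_aux Θk Θi Θj hΘk hΘi hΘj (by linarith)
  have hsi : 0 ≤ sin Θi := Real.sin_nonneg_of_nonneg_of_le_pi hΘi.1 hΘi.2.le
  have hsj : 0 ≤ sin Θj := Real.sin_nonneg_of_nonneg_of_le_pi hΘj.1 hΘj.2.le
  have hsk : 0 ≤ sin Θk := Real.sin_nonneg_of_nonneg_of_le_pi hΘk.1 hΘk.2.le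
  have h1' : 0 ≤ (cos Θi + cos Θj * cos Θk - sin Θj * sin Θk) * (rj * rk * ri ^ 2) :=
    mul_nonneg (by linarith) (by positivity)
  have h2' : 0 ≤ (cos Θj + cos Θk * cos Θi - sin Θk * sin Θi) * (rk * ri * rj ^ 2) :=
    mul_nonneg (by linarith) (by positivity)
  have h3' : 0 ≤ (cos Θk + cos Θi * cos Θj - sin Θi * sin Θj) * (ri * rj * rk ^ 2) :=
    mul_nonneg (by linarith) (by positivity)
  by_cases h : sin Θi = 0 ∧ sin Θj = 0 ∧ sin Θk = 0
  · obtain ⟨e1, e2, e3⟩ := h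
    have t1 : Θi = 0 := by
      rwa [Real.sin_eq_zero_iff_of_lt_of_lt (by linarith [Real.pi_pos, hΘi.1]) hΘi.2] at e1
    have t2 : Θj = 0 := by
      rwa [Real.sin_eq_zero_iff_of_lt_of_lt (by linarith [Real.pi_pos, hΘj.1]) hΘj.2] at e2
    have t3 : Θk = 0 := by
      rwa [Real.sin_eq_zero_iff_of_lt_of_lt (by linarith [Real.pi_pos, hΘk.1]) hΘk.2] at e3
    subst t1 t2 t3
    simp only [Real.sin_zero, Real.cos_zero]
    nlinarith [mul_pos hri hrj, mul_pos hrj hrk, mul_pos hrk hri, sq_nonneg ri, sq_nonneg rj,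
      sq_nonneg rk, mul_pos (mul_pos hri hrj) hrk]
  · have hpos : 0 < sin Θi ∨ 0 < sin Θj ∨ 0 < sin Θk := by
      by_contra hc
      push_neg at hc
      exact h ⟨le_antisymm (hc.1) hsi, le_antisymm (hc.2.1) hsj, le_antisymm (hc.2.2) hsk⟩
    have hsq := sq_nonneg (sin Θi * (rj * rk) + sin Θj * (rk * ri) + sin Θk * (ri * rj))
    rcases hpos with hp | hp | hp
    · nlinarith [mul_pos (mul_pos hp hrj) hrk, mul_nonneg (mul_nonneg hsj hrk.le) hri.le,
        mul_nonneg (mul_nonneg hsk hri.le) hrj.le,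
        mul_pos (mul_pos (mul_pos hp hrj) hrk) (mul_pos (mul_pos hp hrj) hrk)]
    · nlinarith [mul_pos (mul_pos hp hrk) hri, mul_nonneg (mul_nonneg hsi hrj.le) hrk.le,
        mul_nonneg (mul_nonneg hsk hri.le) hrj.le,
        mul_pos (mul_pos (mul_pos hp hrk) hri) (mul_pos (mul_pos hp hrk) hri)]
    · nlinarith [mul_pos (mul_pos hp hri) hrj, mul_nonneg (mul_nonneg hsi hrj.le) hrk.le,
        mul_nonneg (mul_nonneg hsj hrk.le) hri.le,
        mul_pos (mul_pos (mul_pos hp hri) hrj) (mul_pos (mul_pos hp hri) hrj)]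
end

section
/- Let $\Theta_i, \Theta_j, \Theta_k \in (0,\pi)$ with $\Theta_i+\Theta_j+\Theta_k > \pi$, $\Theta_i+\Theta_j < \Theta_k+\pi$, $\Theta_j+\Theta_k < \Theta_i+\pi$, $\Theta_k+\Theta_i < \Theta_j+\pi$, and let $\phi_i,\phi_j,\phi_k \in (0,\pi)$ satisfy $\cos\phi_i = (\cos\Theta_i + \cos\Theta_j\cos\Theta_k)/(\sin\Theta_j\sin\Theta_k)$ and cyclically. Then for all reals $y_i, y_j, y_k > 0$ we have $y_i^2 + y_j^2 + y_k^2 + 2\cos\phi_i\, y_j y_k + 2\cos\phi_j\, y_k y_i + 2\cos\phi_k\, y_i y_j > 0$. -/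
open Real

set_option maxHeartbeats 1000000

/-- Completing-the-square positivity: if `φ_i, φ_j, φ_k` are the side lengths of the
spherical triangle with inner angles `Θ_i, Θ_j, Θ_k`, then the quadratic form
`y_i² + y_j² + y_k² + 2cosφ_i y_j y_k + 2cosφ_j y_k y_i + 2cosφ_k y_i y_j` is
positive on positive vectors. -/
theorem quadratic_form_positive
    (Θi Θj Θk φi φj φk : ℝ)
    (hΘi : Θi ∈ Set.Ioo 0 π) (hΘj : Θj ∈ Set.Ioo 0 π) (hΘk : Θk ∈ Set.Ioo 0 π)
    (hsum : π < Θi + Θj + Θk)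
    (h1 : Θi + Θj < Θk + π) (h2 : Θj + Θk < Θi + π) (h3 : Θk + Θi < Θj + π)
    (hφi : φi ∈ Set.Ioo 0 π) (hφj : φj ∈ Set.Ioo 0 π) (hφk : φk ∈ Set.Ioo 0 π)
    (hcosφi : cos φi = (cos Θi + cos Θj * cos Θk) / (sin Θj * sin Θk))
    (hcosφj : cos φj = (cos Θj + cos Θk * cos Θi) / (sin Θk * sin Θi))
    (hcosφk : cos φk = (cos Θk + cos Θi * cos Θj) / (sin Θi * sin Θj))
    (yi yj yk : ℝ)
    (hjk : 0 ≤ yj * yk) (hki : 0 ≤ yk * yi) (hij : 0 ≤ yi * yj)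
    (hz1 : ¬ (yi = 0 ∧ yj = 0)) (hz2 : ¬ (yj = 0 ∧ yk = 0)) (hz3 : ¬ (yk = 0 ∧ yi = 0))
    (hyi : 0 < yi) (hyj : 0 < yj) (hyk : 0 < yk) :
    0 < yi ^ 2 + yj ^ 2 + yk ^ 2
      + 2 * cos φi * yj * yk + 2 * cos φj * yk * yi + 2 * cos φk * yi * yj := by
  have hsi : 0 < sin Θi := sin_pos_of_pos_of_lt_pi hΘi.1 hΘi.2
  have hsj : 0 < sin Θj := sin_pos_of_pos_of_lt_pi hΘj.1 hΘj.2
  have hsk : 0 < sin Θk := sin_pos_of_pos_of_lt_pi hΘk.1 hΘk.2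
  have hsφj : 0 < sin φj := sin_pos_of_pos_of_lt_pi hφj.1 hφj.2
  have hsφk : 0 < sin φk := sin_pos_of_pos_of_lt_pi hφk.1 hφk.2
  set D : ℝ := 1 - cos Θi ^ 2 - cos Θj ^ 2 - cos Θk ^ 2 - 2 * cos Θi * cos Θj * cos Θk with hD
  have pythi := sin_sq_add_cos_sq Θi
  have pythj := sin_sq_add_cos_sq Θj
  have pythk := sin_sq_add_cos_sq Θk
  have pφj := sin_sq_add_cos_sq φj
  have pφk := sin_sq_add_cos_sq φk
  -- cleared-denominator versions of the cosine hypotheses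
  have hci : cos φi * (sin Θj * sin Θk) = cos Θi + cos Θj * cos Θk := by
    rw [hcosφi]; exact div_mul_cancel₀ _ (by positivity)
  have hcj : cos φj * (sin Θk * sin Θi) = cos Θj + cos Θk * cos Θi := by
    rw [hcosφj]; exact div_mul_cancel₀ _ (by positivity)
  have hck : cos φk * (sin Θi * sin Θj) = cos Θk + cos Θi * cos Θj := by
    rw [hcosφk]; exact div_mul_cancel₀ _ (by positivity)
  have hsq_j : sin φj ^ 2 * (sin Θk * sin Θi) ^ 2 = D := by
    linear_combination (sin Θk * sin Θi) ^ 2 * pφj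
      - (cos φj * (sin Θk * sin Θi) + (cos Θj + cos Θk * cos Θi)) * hcj
      + sin Θi ^ 2 * pythk + (1 - cos Θk ^ 2) * pythi
  have hsq_k : sin φk ^ 2 * (sin Θi * sin Θj) ^ 2 = D := by
    linear_combination (sin Θi * sin Θj) ^ 2 * pφk
      - (cos φk * (sin Θi * sin Θj) + (cos Θk + cos Θi * cos Θj)) * hck
      + sin Θj ^ 2 * pythi + (1 - cos Θi ^ 2) * pythj
  have hDnn : 0 ≤ D := by
    rw [← hsq_j]; positivity
  have hj' : sin φj * (sin Θk * sin Θi) = Real.sqrt D := by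
    rw [← hsq_j, ← mul_pow, Real.sqrt_sq (by positivity)]
  have hk' : sin φk * (sin Θi * sin Θj) = Real.sqrt D := by
    rw [← hsq_k, ← mul_pow, Real.sqrt_sq (by positivity)]
  have hprodm : sin φj * sin φk * (sin Θi ^ 2 * sin Θj * sin Θk) = D := by
    have h : (sin φj * (sin Θk * sin Θi)) * (sin φk * (sin Θi * sin Θj)) = D := by
      rw [hj', hk', Real.mul_self_sqrt hDnn]
    linear_combination h
  have key_mult : cos φi * (sin Θi ^ 2 * sin Θj * sin Θk)
      = (cos φj * cos φk + cos Θi * (sin φj * sin φk)) * (sin Θi ^ 2 * sin Θj * sin Θk) := by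
    have hcjk : (cos φj * (sin Θk * sin Θi)) * (cos φk * (sin Θi * sin Θj))
        = (cos Θj + cos Θk * cos Θi) * (cos Θk + cos Θi * cos Θj) := by rw [hcj, hck]
    linear_combination (sin Θi ^ 2) * hci - hcjk - cos Θi * hprodm
      + (cos Θi + cos Θj * cos Θk) * pythi
  have key : cos φi = cos φj * cos φk + cos Θi * (sin φj * sin φk) :=
    mul_right_cancel₀ (by positivity) key_mult
  have expand : yi ^ 2 + yj ^ 2 + yk ^ 2
      + 2 * cos φi * yj * yk + 2 * cos φj * yk * yi + 2 * cos φk * yi * yj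
      = (yi + cos φj * yk + cos φk * yj) ^ 2
        + (sin φj * yk + cos Θi * sin φk * yj) ^ 2
        + (sin Θi * sin φk * yj) ^ 2 := by
    linear_combination (2 * yj * yk) * key - yk ^ 2 * pφj - yj ^ 2 * pφk
      - (sin φk ^ 2 * yj ^ 2) * pythi
  rw [expand]
  have T : 0 < (sin Θi * sin φk * yj) ^ 2 := by positivity
  linarith [sq_nonneg (yi + cos φj * yk + cos φk * yj),
    sq_nonneg (sin φj * yk + cos Θi * sin φk * yj), T]
end

section
/- Let $D_i, D_j, D_k$ be three pairwise intersecting closed disks on the Riemann sphere with exterior intersection angles $\Theta_i, \Theta_j, \Theta_k \in [0,\pi)$. If $D_i$ and $D_j$ intersect in exactly one point and that point lies in $D_k$, then $\Theta_i + \Theta_j \ge \pi$, with equality if and only if $\partial D_i \cap \partial D_j \cap \partial D_k \neq \emptyset$. -/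
open Real
open scoped RealInnerProductSpace

/-- The geodesic distance between two points of the unit sphere in `ℝ³`. -/
noncomputable def sphDist (x y : EuclideanSpace ℝ (Fin 3)) : ℝ :=
  Real.arccos ⟪x, y⟫

/-- The closed spherical disk with center `z` (a unit vector) and radius `r`. -/
noncomputable def sphDisk (z : EuclideanSpace ℝ (Fin 3)) (r : ℝ) :
    Set (EuclideanSpace ℝ (Fin 3)) :=
  {x | x ∈ Metric.sphere (0 : EuclideanSpace ℝ (Fin 3)) 1 ∧ sphDist z x ≤ r}

/-- The boundary circle of the spherical disk with center `z` and radius `r`. -/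
noncomputable def sphCircle (z : EuclideanSpace ℝ (Fin 3)) (r : ℝ) :
    Set (EuclideanSpace ℝ (Fin 3)) :=
  {x | x ∈ Metric.sphere (0 : EuclideanSpace ℝ (Fin 3)) 1 ∧ sphDist z x = r}


open Real
open scoped RealInnerProductSpace

private lemma eq_of_sq_eq_sq' {x y : ℝ} (hx : 0 ≤ x) (hy : 0 ≤ y) (h : x ^ 2 = y ^ 2) :
    x = y := by
  have h2 : (x - y) * (x + y) = 0 := by linear_combination h
  rcases mul_eq_zero.mp h2 with h3 | h3
  · linarith
  · linarith

private lemma arccos_le_iff_aux {t r : ℝ} (ht : -1 ≤ t) (ht1 : t ≤ 1) (h0 : 0 ≤ r)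
    (hπ : r ≤ π) : arccos t ≤ r ↔ cos r ≤ t := by
  constructor
  · intro h
    have h2 := Real.cos_le_cos_of_nonneg_of_le_pi (arccos_nonneg t) hπ h
    rwa [Real.cos_arccos ht ht1] at h2
  · intro h
    have h2 : arccos t ≤ arccos (cos r) := by
      rw [Real.arccos_eq_pi_div_two_sub_arcsin, Real.arccos_eq_pi_div_two_sub_arcsin]
      have := Real.monotone_arcsin h
      linarith
    rwa [Real.arccos_cos h0 hπ] at h2

private lemma inner_abs_le_one {x y : EuclideanSpace ℝ (Fin 3)} (hx : ‖x‖ = 1)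
    (hy : ‖y‖ = 1) : -1 ≤ ⟪x, y⟫ ∧ ⟪x, y⟫ ≤ 1 := by
  have h := abs_real_inner_le_norm x y
  rw [hx, hy, one_mul] at h
  exact ⟨neg_le_of_abs_le h, le_of_abs_le h⟩

private lemma mem_sphDisk_iff' {z x : EuclideanSpace ℝ (Fin 3)} {r : ℝ} (hz : ‖z‖ = 1)
    (h0 : 0 ≤ r) (hπ : r ≤ π) :
    x ∈ sphDisk z r ↔ ‖x‖ = 1 ∧ cos r ≤ ⟪z, x⟫ := by
  unfold sphDisk sphDist
  simp only [Set.mem_setOf_eq, mem_sphere_zero_iff_norm]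
  constructor
  · rintro ⟨hx, hle⟩
    obtain ⟨hb1, hb2⟩ := inner_abs_le_one hz hx
    exact ⟨hx, (arccos_le_iff_aux hb1 hb2 h0 hπ).1 hle⟩
  · rintro ⟨hx, hle⟩
    obtain ⟨hb1, hb2⟩ := inner_abs_le_one hz hx
    exact ⟨hx, (arccos_le_iff_aux hb1 hb2 h0 hπ).2 hle⟩

private lemma mem_sphCircle_iff' {z x : EuclideanSpace ℝ (Fin 3)} {r : ℝ} (hz : ‖z‖ = 1)
    (h0 : 0 ≤ r) (hπ : r ≤ π) :
    x ∈ sphCircle z r ↔ ‖x‖ = 1 ∧ ⟪z, x⟫ = cos r := by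
  unfold sphCircle sphDist
  simp only [Set.mem_setOf_eq, mem_sphere_zero_iff_norm]
  constructor
  · rintro ⟨hx, hle⟩
    obtain ⟨hb1, hb2⟩ := inner_abs_le_one hz hx
    refine ⟨hx, ?_⟩
    have := congrArg cos hle
    rwa [Real.cos_arccos hb1 hb2] at this
  · rintro ⟨hx, hle⟩
    exact ⟨hx, by rw [hle, Real.arccos_cos h0 hπ]⟩

private lemma exists_unit_orthogonal₂ (a b : EuclideanSpace ℝ (Fin 3)) :
    ∃ n : EuclideanSpace ℝ (Fin 3), ‖n‖ = 1 ∧ ⟪a, n⟫ = 0 ∧ ⟪b, n⟫ = 0 := by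
  classical
  have hK : (Submodule.span ℝ ({a, b} : Set (EuclideanSpace ℝ (Fin 3))))ᗮ ≠ ⊥ := by
    intro h
    have htop : Submodule.span ℝ ({a, b} : Set (EuclideanSpace ℝ (Fin 3))) = ⊤ :=
      Submodule.orthogonal_eq_bot_iff.mp h
    have hcard : ({a, b} : Set (EuclideanSpace ℝ (Fin 3))).toFinset.card ≤ 2 := by
      rw [Set.toFinset_insert, Set.toFinset_singleton]
      exact (Finset.card_insert_le _ _).trans (by simp)
    have hle := (finrank_span_le_card (R := ℝ) ({a, b} : Set (EuclideanSpace ℝ (Fin 3)))).trans hcard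
    rw [htop, finrank_top] at hle
    rw [finrank_euclideanSpace_fin] at hle
    omega
  obtain ⟨x, hxK, hx0⟩ := Submodule.exists_mem_ne_zero_of_ne_bot hK
  refine ⟨‖x‖⁻¹ • x, ?_, ?_, ?_⟩
  · rw [norm_smul, norm_inv, norm_norm, inv_mul_cancel₀ (norm_ne_zero_iff.mpr hx0)]
  · rw [real_inner_smul_right]
    have := (Submodule.mem_orthogonal _ x).1 hxK a (Submodule.subset_span (by simp))
    rw [this, mul_zero]
  · rw [real_inner_smul_right]
    have := (Submodule.mem_orthogonal _ x).1 hxK b (Submodule.subset_span (by simp))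
    rw [this, mul_zero]

private lemma norm_combo {p u : EuclideanSpace ℝ (Fin 3)} (hp : ‖p‖ = 1) (hu : ‖u‖ = 1)
    (hpu : ⟪p, u⟫ = 0) {α β : ℝ} (h : α ^ 2 + β ^ 2 = 1) : ‖α • p + β • u‖ = 1 := by
  have h2 : ‖α • p + β • u‖ ^ 2 = 1 ^ 2 := by
    rw [norm_add_sq_real, real_inner_smul_left, real_inner_smul_right, hpu, norm_smul,
      norm_smul, hp, hu]
    simp only [mul_zero, mul_one, Real.norm_eq_abs, sq_abs]
    linarith
  exact eq_of_sq_eq_sq' (norm_nonneg _) (by norm_num) h2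

private lemma eps_trig {ε : ℝ} (h0 : 0 < ε) (h1 : ε ≤ 1) :
    0 ≤ sin ε ∧ sin ε ≤ ε ∧ 1 - cos ε ≤ ε ∧ cos ε < 1 ∧
    sin ε = 2 * sin (ε / 2) * cos (ε / 2) ∧ 1 - cos ε = 2 * sin (ε / 2) ^ 2 ∧
    0 ≤ sin (ε / 2) ∧ sin (ε / 2) ≤ ε / 2 ∧ 1 / 2 ≤ cos (ε / 2) := by
  have hπ3 := Real.pi_gt_three
  have hsh0 : 0 ≤ sin (ε / 2) :=
    sin_nonneg_of_nonneg_of_le_pi (by linarith) (by linarith)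
  have hsh1 : sin (ε / 2) ≤ ε / 2 := Real.sin_le (by linarith)
  have hsh2 : sin (ε / 2) ≤ 1 := sin_le_one _
  have hcos2 : cos ε = 1 - 2 * sin (ε / 2) ^ 2 := by
    have hc := Real.cos_two_mul (ε / 2)
    have hp := Real.sin_sq_add_cos_sq (ε / 2)
    have h3 : (2 : ℝ) * (ε / 2) = ε := by ring
    rw [h3] at hc
    linarith
  have hsin2 : sin ε = 2 * sin (ε / 2) * cos (ε / 2) := by
    have hs := Real.sin_two_mul (ε / 2)
    have h3 : (2 : ℝ) * (ε / 2) = ε := by ring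
    rw [h3] at hs
    linarith
  have hch : (1 : ℝ) / 2 ≤ cos (ε / 2) := by
    have := Real.cos_le_cos_of_nonneg_of_le_pi (x := ε / 2) (y := π / 3)
      (by linarith) (by linarith) (by linarith)
    rwa [Real.cos_pi_div_three] at this
  refine ⟨sin_nonneg_of_nonneg_of_le_pi h0.le (by linarith), Real.sin_le h0.le, ?_, ?_,
    hsin2, by linarith, hsh0, hsh1, hch⟩
  · nlinarith
  · have := Real.cos_lt_cos_of_nonneg_of_le_pi (x := 0) (y := ε) le_rfl (by linarith) h0
    rwa [Real.cos_zero] at this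

private lemma pert_w_ineq {a s q c se ce : ℝ} (ha1 : a ≤ 1) (hq0 : 0 ≤ q)
    (hqs : q ≤ s / 2) (hc : 1 / 2 ≤ c) (hs0 : 0 < s)
    (hsin : se = 2 * q * c) (hcos : 1 - ce = 2 * q ^ 2) :
    a * (1 - ce) ≤ s * se := by
  have h1 : a * q ≤ q := by nlinarith
  have h2 : q ≤ s * c := by nlinarith
  nlinarith [mul_nonneg hq0 (sub_nonneg.2 (h1.trans h2))]

private lemma second_point_core {z p u : EuclideanSpace ℝ (Fin 3)}
    (hz : ‖z‖ = 1) (hp : ‖p‖ = 1) (hu : ‖u‖ = 1) (hpu : ⟪p, u⟫ = 0) {r ε : ℝ}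
    (hr : cos r < ⟪z, p⟫) (hε0 : 0 < ε) (hε1 : ε ≤ 1)
    (hεz : ε ≤ (⟪z, p⟫ - cos r) / 2) :
    cos r ≤ ⟪z, cos ε • p + sin ε • u⟫ ∧ ‖cos ε • p + sin ε • u‖ = 1 ∧
      cos ε • p + sin ε • u ≠ p := by
  obtain ⟨hs0, hs1, hc1, hclt, -, -, -, -, -⟩ := eps_trig hε0 hε1
  have hzu := inner_abs_le_one hz hu
  have hzp := inner_abs_le_one hz hp
  have hval : ⟪z, cos ε • p + sin ε • u⟫ = cos ε * ⟪z, p⟫ + sin ε * ⟪z, u⟫ := by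
    rw [inner_add_right, real_inner_smul_right, real_inner_smul_right]
  refine ⟨?_, norm_combo hp hu hpu (by rw [← Real.sin_sq_add_cos_sq ε]; ring), ?_⟩
  · rw [hval]
    have k1 : 0 ≤ (1 - cos ε) * (1 - ⟪z, p⟫) :=
      mul_nonneg (by linarith [Real.cos_le_one ε]) (by linarith [hzp.2])
    have k2 : 0 ≤ sin ε * (1 + ⟪z, u⟫) := mul_nonneg hs0 (by linarith [hzu.1])
    nlinarith [k1, k2]
  · intro hq
    have : ⟪p, cos ε • p + sin ε • u⟫ = cos ε := by
      rw [inner_add_right, real_inner_smul_right, real_inner_smul_right, hpu,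
        real_inner_self_eq_norm_sq, hp]
      ring
    rw [hq, real_inner_self_eq_norm_sq, hp] at this
    simp at this
    linarith

private lemma exists_second_point {z w p : EuclideanSpace ℝ (Fin 3)}
    (hz : ‖z‖ = 1) (hw : ‖w‖ = 1) (hp : ‖p‖ = 1) {r r' : ℝ}
    (hr0 : 0 < r) (hrπ : r < π) (hr'0 : 0 < r') (hr'π : r' < π)
    (hpz : cos r < ⟪z, p⟫) (hpw : cos r' ≤ ⟪w, p⟫) :
    ∃ q : EuclideanSpace ℝ (Fin 3),
      ‖q‖ = 1 ∧ q ≠ p ∧ cos r ≤ ⟪z, q⟫ ∧ cos r' ≤ ⟪w, q⟫ := by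
  have hwp : ⟪p, w⟫ = ⟪w, p⟫ := real_inner_comm w p
  set a : ℝ := ⟪w, p⟫ with ha
  set v : EuclideanSpace ℝ (Fin 3) := w - a • p with hv
  have hpv : ⟪p, v⟫ = 0 := by
    rw [hv, inner_sub_right, real_inner_smul_right, real_inner_self_eq_norm_sq, hp, hwp]
    ring
  by_cases hv0 : v = 0
  · -- w = a • p with a = 1, i.e. w = p
    have hwap : w = a • p := by
      have := sub_eq_zero.mp (hv ▸ hv0)
      exact this
    have haa : |a| = 1 := by
      have := congrArg norm hwap
      rwa [hw, norm_smul, hp, mul_one, Real.norm_eq_abs, eq_comm] at this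
    have ha1 : a = 1 := by
      rcases abs_eq (by norm_num : (0:ℝ) ≤ 1) |>.mp haa with h | h
      · exact h
      · exfalso
        have hcc : cos π < cos r' :=
          Real.cos_lt_cos_of_nonneg_of_le_pi hr'0.le le_rfl hr'π
        rw [Real.cos_pi] at hcc
        rw [ha] at h
        linarith
    have hwp' : w = p := by rw [hwap, ha1, one_smul]
    obtain ⟨u, hu, hpu, -⟩ := exists_unit_orthogonal₂ p p
    set ε : ℝ := min r' (min 1 ((⟪z, p⟫ - cos r) / 2)) with hε
    have hε0 : 0 < ε := lt_min hr'0 (lt_min one_pos (by linarith))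
    have hε1 : ε ≤ 1 := (min_le_right _ _).trans (min_le_left _ _)
    have hεz : ε ≤ (⟪z, p⟫ - cos r) / 2 := (min_le_right _ _).trans (min_le_right _ _)
    have hεr' : ε ≤ r' := min_le_left _ _
    obtain ⟨hq1, hq2, hq3⟩ := second_point_core hz hp hu hpu hpz hε0 hε1 hεz
    refine ⟨cos ε • p + sin ε • u, hq2, hq3, hq1, ?_⟩
    have : ⟪w, cos ε • p + sin ε • u⟫ = cos ε := by
      rw [hwp', inner_add_right, real_inner_smul_right, real_inner_smul_right, hpu,
        real_inner_self_eq_norm_sq, hp]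
      ring
    rw [this]
    exact Real.cos_le_cos_of_nonneg_of_le_pi hε0.le hr'π.le hεr'
  · -- general position
    have hs0 : 0 < ‖v‖ := norm_pos_iff.mpr hv0
    set s : ℝ := ‖v‖ with hsdef
    have hwv : ⟪w, v⟫ = s ^ 2 := by
      have h1 : ⟪w, v⟫ = 1 - a ^ 2 := by
        rw [hv, inner_sub_right, real_inner_smul_right, real_inner_self_eq_norm_sq, hw]
        ring
      have h2 : s ^ 2 = 1 - a ^ 2 := by
        rw [hsdef, ← real_inner_self_eq_norm_sq, hv, inner_sub_left, inner_sub_right,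
          inner_sub_right, real_inner_smul_left, real_inner_smul_right,
          real_inner_smul_right, real_inner_smul_left, real_inner_self_eq_norm_sq,
          real_inner_self_eq_norm_sq, hw, hp, hwp]
        ring
      rw [h1, h2]
    set u : EuclideanSpace ℝ (Fin 3) := s⁻¹ • v with hu
    have hu1 : ‖u‖ = 1 := by
      rw [hu, norm_smul, norm_inv, norm_norm, ← hsdef, inv_mul_cancel₀ hs0.ne']
    have hpu : ⟪p, u⟫ = 0 := by rw [hu, real_inner_smul_right, hpv, mul_zero]
    have hwu : ⟪w, u⟫ = s := by
      rw [hu, real_inner_smul_right, hwv, sq]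
      field_simp
    set ε : ℝ := min s (min 1 ((⟪z, p⟫ - cos r) / 2)) with hε
    have hε0 : 0 < ε := lt_min hs0 (lt_min one_pos (by linarith))
    have hε1 : ε ≤ 1 := (min_le_right _ _).trans (min_le_left _ _)
    have hεz : ε ≤ (⟪z, p⟫ - cos r) / 2 := (min_le_right _ _).trans (min_le_right _ _)
    have hεs : ε ≤ s := min_le_left _ _
    obtain ⟨hq1, hq2, hq3⟩ := second_point_core hz hp hu1 hpu hpz hε0 hε1 hεz
    refine ⟨cos ε • p + sin ε • u, hq2, hq3, hq1, ?_⟩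
    have hval : ⟪w, cos ε • p + sin ε • u⟫ = a * cos ε + s * sin ε := by
      rw [inner_add_right, real_inner_smul_right, real_inner_smul_right, hwu, ← ha]
      ring
    rw [hval]
    obtain ⟨-, -, -, -, hsin2, hcos2, hsh0, hsh1, hch⟩ := eps_trig hε0 hε1
    have ha1 : a ≤ 1 := (inner_abs_le_one hw hp).2
    have hW : a * (1 - cos ε) ≤ s * sin ε :=
      pert_w_ineq ha1 hsh0 (by linarith) hch hs0 hsin2 (by linarith)
    nlinarith [hW, hpw]

private lemma unit_perp_component {x y : EuclideanSpace ℝ (Fin 3)}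
    (hx : ‖x‖ = 1) (hy : ‖y‖ = 1) {s : ℝ} (hs : 0 < s)
    (h : 1 - ⟪x, y⟫ ^ 2 = s ^ 2) :
    ‖s⁻¹ • (y - ⟪x, y⟫ • x)‖ = 1 ∧ ⟪x, s⁻¹ • (y - ⟪x, y⟫ • x)⟫ = 0 ∧
      ⟪y, s⁻¹ • (y - ⟪x, y⟫ • x)⟫ = s := by
  have hyx : ⟪y, x⟫ = ⟪x, y⟫ := real_inner_comm x y
  have hxv : ⟪x, y - ⟪x, y⟫ • x⟫ = 0 := by
    rw [inner_sub_right, real_inner_smul_right, real_inner_self_eq_norm_sq, hx]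
    ring
  have hyv : ⟪y, y - ⟪x, y⟫ • x⟫ = s ^ 2 := by
    rw [inner_sub_right, real_inner_smul_right, real_inner_self_eq_norm_sq, hy, hyx]
    linear_combination h
  have hnv : ‖y - ⟪x, y⟫ • x‖ = s := by
    apply eq_of_sq_eq_sq' (norm_nonneg _) hs.le
    rw [← real_inner_self_eq_norm_sq, inner_sub_left, real_inner_smul_left, hxv, hyv]
    ring
  refine ⟨?_, ?_, ?_⟩
  · rw [norm_smul, Real.norm_eq_abs, abs_of_pos (inv_pos.2 hs), hnv,
      inv_mul_cancel₀ hs.ne']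
  · rw [real_inner_smul_right, hxv, mul_zero]
  · rw [real_inner_smul_right, hyv, sq]
    field_simp

private lemma inner_combo (z x y : EuclideanSpace ℝ (Fin 3)) (α β : ℝ) :
    ⟪z, α • x + β • y⟫ = α * ⟪z, x⟫ + β * ⟪z, y⟫ := by
  rw [inner_add_right, real_inner_smul_right, real_inner_smul_right]

private lemma pyth_combo (t : ℝ) : (cos t) ^ 2 + (sin t) ^ 2 = 1 := by
  rw [← Real.sin_sq_add_cos_sq t]; ring

set_option maxHeartbeats 3200000 in
/-- Lemma 2.6 (second part): if `D_i` and `D_j` intersect in exactly one point which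
lies in `D_k`, then `Θ_i + Θ_j ≥ π`, with equality iff the three boundary circles have
a common point. -/
theorem angle_relation_of_tangent
    (zi zj zk : EuclideanSpace ℝ (Fin 3))
    (hzi : zi ∈ Metric.sphere (0 : EuclideanSpace ℝ (Fin 3)) 1)
    (hzj : zj ∈ Metric.sphere (0 : EuclideanSpace ℝ (Fin 3)) 1)
    (hzk : zk ∈ Metric.sphere (0 : EuclideanSpace ℝ (Fin 3)) 1)
    (ri rj rk Θi Θj Θk : ℝ)
    (hri : ri ∈ Set.Ioo 0 π) (hrj : rj ∈ Set.Ioo 0 π) (hrk : rk ∈ Set.Ioo 0 π)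
    (hΘi : Θi ∈ Set.Ico 0 π) (hΘj : Θj ∈ Set.Ico 0 π) (hΘk : Θk ∈ Set.Ico 0 π)
    -- exterior intersection angles: `Θ_k` for the pair `(D_i, D_j)`, etc.
    (hij : cos (sphDist zi zj) = cos ri * cos rj - cos Θk * sin ri * sin rj)
    (hjk : cos (sphDist zj zk) = cos rj * cos rk - cos Θi * sin rj * sin rk)
    (hki : cos (sphDist zk zi) = cos rk * cos ri - cos Θj * sin rk * sin ri)
    -- the disks pairwise intersect
    (hmjk : (sphDisk zj rj ∩ sphDisk zk rk).Nonempty)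
    (hmki : (sphDisk zk rk ∩ sphDisk zi ri).Nonempty)
    -- `D_i ∩ D_j` is a single point lying in `D_k`
    (p : EuclideanSpace ℝ (Fin 3))
    (hone : sphDisk zi ri ∩ sphDisk zj rj = {p})
    (hpk : p ∈ sphDisk zk rk) :
    Θi + Θj ≥ π ∧
      (Θi + Θj = π ↔ (sphCircle zi ri ∩ sphCircle zj rj ∩ sphCircle zk rk).Nonempty) := by
  rw [mem_sphere_zero_iff_norm] at hzi hzj hzk
  obtain ⟨hri0, hriπ⟩ := hri
  obtain ⟨hrj0, hrjπ⟩ := hrj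
  obtain ⟨hrk0, hrkπ⟩ := hrk
  have hsi : 0 < sin ri := sin_pos_of_pos_of_lt_pi hri0 hriπ
  have hsj : 0 < sin rj := sin_pos_of_pos_of_lt_pi hrj0 hrjπ
  have hsk : 0 < sin rk := sin_pos_of_pos_of_lt_pi hrk0 hrkπ
  have hci1 : cos ri < 1 := by
    have := Real.cos_lt_cos_of_nonneg_of_le_pi (x := 0) (y := ri) le_rfl hriπ.le hri0
    rwa [Real.cos_zero] at this
  have hcj1 : cos rj < 1 := by
    have := Real.cos_lt_cos_of_nonneg_of_le_pi (x := 0) (y := rj) le_rfl hrjπ.le hrj0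
    rwa [Real.cos_zero] at this
  have hp_mem : p ∈ sphDisk zi ri ∩ sphDisk zj rj := by rw [hone]; exact rfl
  obtain ⟨hpi, hpj⟩ := hp_mem
  rw [mem_sphDisk_iff' hzi hri0.le hriπ.le] at hpi
  rw [mem_sphDisk_iff' hzj hrj0.le hrjπ.le] at hpj
  obtain ⟨hp1, hpi2⟩ := hpi
  obtain ⟨-, hpj2⟩ := hpj
  have huniq : ∀ q : EuclideanSpace ℝ (Fin 3), ‖q‖ = 1 → cos ri ≤ ⟪zi, q⟫ →
      cos rj ≤ ⟪zj, q⟫ → q = p := by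
    intro q h1 h2 h3
    have hq : q ∈ sphDisk zi ri ∩ sphDisk zj rj :=
      ⟨(mem_sphDisk_iff' hzi hri0.le hriπ.le).2 ⟨h1, h2⟩,
       (mem_sphDisk_iff' hzj hrj0.le hrjπ.le).2 ⟨h1, h3⟩⟩
    rw [hone] at hq
    exact hq
  -- Step 1: p lies on both boundary circles
  have hbi : ⟪zi, p⟫ = cos ri := by
    by_contra h
    obtain ⟨q, hq1, hq2, hq3, hq4⟩ := exists_second_point hzi hzj hp1 hri0 hriπ hrj0 hrjπ
      (lt_of_le_of_ne hpi2 (Ne.symm h)) hpj2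
    exact hq2 (huniq q hq1 hq3 hq4)
  have hbj : ⟪zj, p⟫ = cos rj := by
    by_contra h
    obtain ⟨q, hq1, hq2, hq3, hq4⟩ := exists_second_point hzj hzi hp1 hrj0 hrjπ hri0 hriπ
      (lt_of_le_of_ne hpj2 (Ne.symm h)) hpi2
    exact hq2 (huniq q hq1 hq4 hq3)
  set c : ℝ := ⟪zi, zj⟫ with hc_def
  have hcji : ⟪zj, zi⟫ = c := by rw [hc_def]; exact real_inner_comm zi zj
  have hcb : -1 ≤ c ∧ c ≤ 1 := inner_abs_le_one hzi hzj
  -- degenerate cases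
  have hcne1 : c ≠ 1 := by
    intro h
    have hzip : zi = p := by
      apply huniq zi hzi
      · rw [real_inner_self_eq_norm_sq, hzi, one_pow]
        exact Real.cos_le_one ri
      · rw [hcji, h]
        exact Real.cos_le_one rj
    rw [← hzip, real_inner_self_eq_norm_sq, hzi, one_pow] at hbi
    linarith
  have hcnem1 : c ≠ -1 := by
    intro h
    have hzz : zj = -zi := by
      have hn : ‖zi + zj‖ ^ 2 = 0 := by
        rw [norm_add_sq_real, hzi, hzj, ← hc_def, h]
        norm_num
      have h0 := (pow_eq_zero_iff (n := 2) (by norm_num)).mp hn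
      have h0' := norm_eq_zero.mp h0
      exact eq_neg_of_add_eq_zero_right h0'
    have hcji' : cos rj = -cos ri := by
      rw [← hbj, hzz, inner_neg_left, hbi]
    obtain ⟨u, hu1, hu2, -⟩ := exists_unit_orthogonal₂ zi zi
    obtain ⟨v, hv1, hv2, hv3⟩ := exists_unit_orthogonal₂ zi u
    have hmm : ∀ t : EuclideanSpace ℝ (Fin 3), ‖t‖ = 1 → ⟪zi, t⟫ = 0 →
        cos ri • zi + sin ri • t = p := by
      intro t ht1 ht2
      apply huniq
      · exact norm_combo hzi ht1 ht2 (pyth_combo ri)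
      · rw [inner_combo, real_inner_self_eq_norm_sq, hzi, one_pow, ht2]
        norm_num
      · rw [hzz, inner_neg_left, inner_combo, real_inner_self_eq_norm_sq, hzi, one_pow,
          ht2, hcji']
        norm_num
    have heq : cos ri • zi + sin ri • u = cos ri • zi + sin ri • v :=
      (hmm u hu1 hu2).trans (hmm v hv1 hv2).symm
    have h1 : ⟪u, cos ri • zi + sin ri • u⟫ = sin ri := by
      rw [inner_combo, real_inner_comm zi u, hu2, real_inner_self_eq_norm_sq, hu1, one_pow]
      ring
    have h2 : ⟪u, cos ri • zi + sin ri • v⟫ = 0 := by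
      rw [inner_combo, real_inner_comm zi u, hu2, hv3]
      ring
    rw [heq, h2] at h1
    linarith
  have hclt : c ^ 2 < 1 := by
    have h1' : -1 < c := lt_of_le_of_ne hcb.1 (Ne.symm hcnem1)
    have h2' : c < 1 := lt_of_le_of_ne hcb.2 hcne1
    have habs : |c| < 1 := abs_lt.mpr ⟨h1', h2'⟩
    calc c ^ 2 = |c| ^ 2 := (sq_abs c).symm
      _ < 1 := by nlinarith [abs_nonneg c]
  -- Reflection: p lies in the plane of zi and zj
  obtain ⟨n, hn1, hni, hnj⟩ := exists_unit_orthogonal₂ zi zj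
  have hnp : ⟪n, p⟫ = 0 := by
    have hpn : ⟪p, n⟫ = ⟪n, p⟫ := real_inner_comm n p
    have hq : p - (2 * ⟪n, p⟫) • n = p := by
      apply huniq
      · apply eq_of_sq_eq_sq' (norm_nonneg _) (by norm_num)
        rw [norm_sub_sq_real, real_inner_smul_right, norm_smul, Real.norm_eq_abs, hn1,
          hp1, hpn]
        rw [mul_one, sq_abs]
        ring
      · rw [inner_sub_right, real_inner_smul_right, hni, hbi]
        norm_num
      · rw [inner_sub_right, real_inner_smul_right, hnj, hbj]
        norm_num
    have h2 : (2 * ⟪n, p⟫) • n = 0 := by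
      have := sub_eq_self.mp hq
      exact this
    rcases smul_eq_zero.mp h2 with h3 | h3
    · linarith
    · rw [h3] at hn1
      simp at hn1
  have hn0 : n ≠ 0 := by
    intro h
    rw [h] at hn1
    simp at hn1
  -- p ∈ span {zi, zj}
  have hindep : LinearIndependent ℝ ![zi, zj] := by
    rw [LinearIndependent.pair_iff]
    intro s t hst
    have h1 : s * 1 + t * c = 0 := by
      have h := congrArg (fun x : EuclideanSpace ℝ (Fin 3) => ⟪zi, x⟫) hst
      simp only [inner_zero_right] at h
      rw [inner_combo, real_inner_self_eq_norm_sq, hzi, one_pow, ← hc_def] at h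
      exact h
    have h2 : s * c + t * 1 = 0 := by
      have h := congrArg (fun x : EuclideanSpace ℝ (Fin 3) => ⟪zj, x⟫) hst
      simp only [inner_zero_right] at h
      rw [inner_combo, real_inner_self_eq_norm_sq, hzj, one_pow, hcji] at h
      exact h
    have hne : (1 - c ^ 2) ≠ 0 := by have := hclt; intro hc0; nlinarith [hc0]
    have hs' : s * (1 - c ^ 2) = 0 := by linear_combination h1 - c * h2
    have ht' : t * (1 - c ^ 2) = 0 := by linear_combination h2 - c * h1
    exact ⟨(mul_eq_zero.mp hs').resolve_right hne, (mul_eq_zero.mp ht').resolve_right hne⟩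
  have hspan : Submodule.span ℝ ({zi, zj} : Set (EuclideanSpace ℝ (Fin 3))) =
      (Submodule.span ℝ ({n} : Set (EuclideanSpace ℝ (Fin 3))))ᗮ := by
    have hle : Submodule.span ℝ ({zi, zj} : Set (EuclideanSpace ℝ (Fin 3))) ≤
        (Submodule.span ℝ ({n} : Set (EuclideanSpace ℝ (Fin 3))))ᗮ := by
      rw [Submodule.span_le]
      intro x hx
      simp only [Set.mem_insert_iff, Set.mem_singleton_iff] at hx
      rw [SetLike.mem_coe, Submodule.mem_orthogonal]
      intro u hu
      obtain ⟨t, rfl⟩ := Submodule.mem_span_singleton.mp hu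
      rcases hx with rfl | rfl
      · rw [real_inner_smul_left, real_inner_comm, hni, mul_zero]
      · rw [real_inner_smul_left, real_inner_comm, hnj, mul_zero]
    apply Submodule.eq_of_le_of_finrank_le hle
    have hdim1 : Module.finrank ℝ
        (Submodule.span ℝ ({n} : Set (EuclideanSpace ℝ (Fin 3)))) = 1 :=
      finrank_span_singleton hn0
    have hdim : Module.finrank ℝ
        ((Submodule.span ℝ ({n} : Set (EuclideanSpace ℝ (Fin 3))))ᗮ) = 2 := by
      have := Submodule.finrank_add_finrank_orthogonal
        (K := Submodule.span ℝ ({n} : Set (EuclideanSpace ℝ (Fin 3))))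
      rw [hdim1, finrank_euclideanSpace_fin] at this
      omega
    have hdim2 : Module.finrank ℝ
        (Submodule.span ℝ ({zi, zj} : Set (EuclideanSpace ℝ (Fin 3)))) = 2 := by
      have hr : Set.range ![zi, zj] = {zi, zj} := by
        simp only [Matrix.range_cons, Matrix.range_empty, Set.union_empty,
          Set.union_singleton]
        exact Set.pair_comm zj zi
      have := finrank_span_eq_card hindep
      rw [hr] at this
      rw [this]
      simp
    rw [hdim, hdim2]
  have hpspan : p ∈ Submodule.span ℝ ({zi, zj} : Set (EuclideanSpace ℝ (Fin 3))) := by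
    rw [hspan, Submodule.mem_orthogonal]
    intro u hu
    obtain ⟨t, rfl⟩ := Submodule.mem_span_singleton.mp hu
    rw [real_inner_smul_left, hnp, mul_zero]
  obtain ⟨a, b, hab⟩ := Submodule.mem_span_pair.mp hpspan
  -- the three scalar equations
  have e1 : a + b * c = cos ri := by
    have h := congrArg (fun x : EuclideanSpace ℝ (Fin 3) => ⟪zi, x⟫) hab
    simp only [inner_combo] at h
    rw [real_inner_self_eq_norm_sq, hzi, one_pow, ← hc_def, hbi] at h
    linarith
  have e2 : a * c + b = cos rj := by
    have h := congrArg (fun x : EuclideanSpace ℝ (Fin 3) => ⟪zj, x⟫) hab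
    simp only [inner_combo] at h
    rw [real_inner_self_eq_norm_sq, hzj, one_pow, hcji, hbj] at h
    linarith
  have e3 : a * cos ri + b * cos rj = 1 := by
    have h := congrArg (fun x : EuclideanSpace ℝ (Fin 3) => ⟪x, p⟫) hab
    simp only [inner_add_left, real_inner_smul_left] at h
    rw [hbi, hbj, real_inner_self_eq_norm_sq, hp1, one_pow] at h
    linarith
  have hkeyq : c ^ 2 - 2 * c * cos ri * cos rj + cos ri ^ 2 + cos rj ^ 2 - 1 = 0 := by
    rw [← e1, ← e2] at e3 ⊢
    linear_combination (1 - c ^ 2) * e3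
  have hfac : (c - (cos ri * cos rj - sin ri * sin rj)) *
      (c - (cos ri * cos rj + sin ri * sin rj)) = 0 := by
    have s1 : sin ri ^ 2 = 1 - cos ri ^ 2 := Real.sin_sq ri
    have s2 : sin rj ^ 2 = 1 - cos rj ^ 2 := Real.sin_sq rj
    linear_combination hkeyq - sin rj ^ 2 * s1 - (1 - cos ri ^ 2) * s2
  rcases mul_eq_zero.mp hfac with hcase | hcase
  swap
  · -- internal tangency: c = cos (ri - rj), contradiction
    exfalso
    have hcc : c = cos ri * cos rj + sin ri * sin rj := by linarith [sub_eq_zero.mp hcase]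
    have hcsub : c = cos (ri - rj) := by rw [Real.cos_sub]; linarith
    rcases le_total rj ri with hle | hle
    · have h1 : zj = p := by
        apply huniq zj hzj
        · rw [← hc_def, hcsub]
          exact Real.cos_le_cos_of_nonneg_of_le_pi (by linarith) hriπ.le (by linarith)
        · rw [real_inner_self_eq_norm_sq, hzj, one_pow]
          exact Real.cos_le_one rj
      rw [h1] at hbj
      rw [← h1, real_inner_self_eq_norm_sq, hzj, one_pow] at hbj
      linarith
    · have h1 : zi = p := by
        apply huniq zi hzi
        · rw [real_inner_self_eq_norm_sq, hzi, one_pow]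
          exact Real.cos_le_one ri
        · have hsym : cos (ri - rj) = cos (rj - ri) := by
            rw [← Real.cos_neg (ri - rj), neg_sub]
          rw [hcji, hcsub, hsym]
          exact Real.cos_le_cos_of_nonneg_of_le_pi (by linarith) hrjπ.le (by linarith)
      rw [← h1, real_inner_self_eq_norm_sq, hzi, one_pow] at hbi
      linarith
  -- external tangency: c = cos (ri + rj)
  have hcc : c = cos ri * cos rj - sin ri * sin rj := by linarith [sub_eq_zero.mp hcase]
  have hcadd : c = cos (ri + rj) := by rw [Real.cos_add]; linarith
  rcases lt_trichotomy (ri + rj) π with hσlt | hσeq | hσgt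
  rotate_left
  · -- ri + rj = π : impossible since |c| < 1
    exfalso
    rw [hσeq, Real.cos_pi] at hcadd
    exact hcnem1 hcadd
  · -- ri + rj > π : impossible, two distinct common points
    exfalso
    have hsσneg : sin (ri + rj) < 0 := by
      have h1 : 0 < sin (ri + rj - π) := sin_pos_of_pos_of_lt_pi (by linarith) (by linarith)
      have h2 : sin (ri + rj - π) = -sin (ri + rj) := by
        rw [Real.sin_sub, Real.sin_pi, Real.cos_pi]
        ring
      linarith
    set s : ℝ := -sin (ri + rj) with hs_def
    have hs0 : 0 < s := by rw [hs_def]; linarith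
    have h1c : 1 - c ^ 2 = s ^ 2 := by
      rw [hs_def, hcadd]
      linear_combination (-1 : ℝ) * Real.sin_sq (ri + rj)
    obtain ⟨hu1, hu2, hu3⟩ := unit_perp_component hzi hzj hs0 (by rw [← hc_def]; exact h1c)
    set u : EuclideanSpace ℝ (Fin 3) := s⁻¹ • (zj - ⟪zi, zj⟫ • zi) with hu_def
    have h1c' : 1 - ⟪zj, zi⟫ ^ 2 = s ^ 2 := by rw [hcji]; exact h1c
    obtain ⟨hv1, hv2, hv3⟩ := unit_perp_component hzj hzi hs0 h1c'
    set v : EuclideanSpace ℝ (Fin 3) := s⁻¹ • (zi - ⟪zj, zi⟫ • zj) with hv_def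
    have hx : cos ri • zi + sin ri • u = p := by
      apply huniq
      · exact norm_combo hzi hu1 hu2 (pyth_combo ri)
      · rw [inner_combo, real_inner_self_eq_norm_sq, hzi, one_pow, hu2]
        norm_num
      · rw [inner_combo, hcji]
        have hju : ⟪zj, u⟫ = s := hu3
        rw [hju, hcadd, hs_def]
        have hval : cos ri * cos (ri + rj) + sin ri * -sin (ri + rj)
            = cos ((ri + rj) + ri) := by rw [Real.cos_add (ri + rj) ri]; ring
        rw [hval, ← Real.cos_two_pi_sub (ri + rj + ri),
          ← Real.cos_abs (2 * π - (ri + rj + ri))]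
        apply Real.cos_le_cos_of_nonneg_of_le_pi (abs_nonneg _) hrjπ.le
        rw [abs_le]
        constructor <;> linarith
    have hy : cos rj • zj + sin rj • v = p := by
      apply huniq
      · exact norm_combo hzj hv1 hv2 (pyth_combo rj)
      swap
      · rw [inner_combo, real_inner_self_eq_norm_sq, hzj, one_pow, hv2]
        norm_num
      · rw [inner_combo, ← hc_def]
        have hiv : ⟪zi, v⟫ = s := hv3
        rw [hiv, hcadd, hs_def]
        have hval : cos rj * cos (ri + rj) + sin rj * -sin (ri + rj)
            = cos ((ri + rj) + rj) := by rw [Real.cos_add (ri + rj) rj]; ring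
        rw [hval, ← Real.cos_two_pi_sub (ri + rj + rj),
          ← Real.cos_abs (2 * π - (ri + rj + rj))]
        apply Real.cos_le_cos_of_nonneg_of_le_pi (abs_nonneg _) hriπ.le
        rw [abs_le]
        constructor <;> linarith
    have hxy := hx.trans hy.symm
    have hinner := congrArg (fun x : EuclideanSpace ℝ (Fin 3) => ⟪zi, x⟫) hxy
    simp only [inner_combo] at hinner
    rw [real_inner_self_eq_norm_sq, hzi, one_pow, hu2, ← hc_def, hv3] at hinner
    -- hinner : cos ri * 1 + sin ri * 0 = cos rj * c + sin rj * s
    have heq' : cos ri = cos rj * c + sin rj * s := by linarith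
    have hsexp : s = -(sin ri * cos rj + cos ri * sin rj) := by
      rw [hs_def, Real.sin_add]
    have hsq : sin rj ^ 2 = 1 - cos rj ^ 2 := Real.sin_sq rj
    have hzz : sin rj * s = 0 := by
      linear_combination (-(1 / 2 : ℝ)) * heq' - (cos rj / 2) * hcc +
        (sin rj / 2) * hsexp - (cos ri / 2) * hsq
    exact (mul_pos hsj hs0).ne' hzz
  -- main case: ri + rj < π
  have hsσ : 0 < sin (ri + rj) := sin_pos_of_pos_of_lt_pi (by linarith) hσlt
  have haa : a * sin (ri + rj) = sin rj := by
    have h4 : a * (1 - c ^ 2) = cos ri - c * cos rj := by linear_combination e1 - c * e2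
    have h5 : 1 - c ^ 2 = sin (ri + rj) ^ 2 := by
      rw [hcadd]
      linear_combination (-1 : ℝ) * Real.sin_sq (ri + rj)
    have h6 : cos ri - c * cos rj = sin rj * sin (ri + rj) := by
      rw [Real.sin_add, hcc]
      linear_combination (-(cos ri)) * Real.sin_sq rj
    rw [h5, h6] at h4
    apply mul_right_cancel₀ hsσ.ne'
    linear_combination h4
  have hbb : b * sin (ri + rj) = sin ri := by
    have h4 : b * (1 - c ^ 2) = cos rj - c * cos ri := by linear_combination e2 - c * e1
    have h5 : 1 - c ^ 2 = sin (ri + rj) ^ 2 := by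
      rw [hcadd]
      linear_combination (-1 : ℝ) * Real.sin_sq (ri + rj)
    have h6 : cos rj - c * cos ri = sin ri * sin (ri + rj) := by
      rw [Real.sin_add, hcc]
      linear_combination (-(cos rj)) * Real.sin_sq ri
    rw [h5, h6] at h4
    apply mul_right_cancel₀ hsσ.ne'
    linear_combination h4
  have hIP : ∀ x y : EuclideanSpace ℝ (Fin 3), ‖x‖ = 1 → ‖y‖ = 1 →
      cos (sphDist x y) = ⟪x, y⟫ := by
    intro x y hx hy
    unfold sphDist
    exact Real.cos_arccos (inner_abs_le_one hx hy).1 (inner_abs_le_one hx hy).2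
  have hA : ⟪zk, zi⟫ = cos rk * cos ri - cos Θj * sin rk * sin ri := by
    rw [← hIP zk zi hzk hzi, hki]
  have hB : ⟪zk, zj⟫ = cos rj * cos rk - cos Θi * sin rj * sin rk := by
    rw [real_inner_comm, ← hIP zj zk hzj hzk, hjk]
  have hPk : ⟪zk, p⟫ = a * ⟪zk, zi⟫ + b * ⟪zk, zj⟫ := by
    rw [← hab, inner_combo]
  have hM : ⟪zk, p⟫ * sin (ri + rj) =
      cos rk * sin (ri + rj) - sin rk * sin ri * sin rj * (cos Θi + cos Θj) := by
    calc ⟪zk, p⟫ * sin (ri + rj)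
        = (a * sin (ri + rj)) * ⟪zk, zi⟫ + (b * sin (ri + rj)) * ⟪zk, zj⟫ := by
          rw [hPk]; ring
      _ = sin rj * ⟪zk, zi⟫ + sin ri * ⟪zk, zj⟫ := by rw [haa, hbb]
      _ = cos rk * sin (ri + rj) - sin rk * sin ri * sin rj * (cos Θi + cos Θj) := by
          rw [hA, hB, Real.sin_add]; ring
  have hineq : cos rk ≤ ⟪zk, p⟫ :=
    ((mem_sphDisk_iff' hzk hrk0.le hrkπ.le).1 hpk).2
  have hsum : cos Θi + cos Θj ≤ 0 := by
    have h1 : cos rk * sin (ri + rj) ≤ ⟪zk, p⟫ * sin (ri + rj) :=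
      mul_le_mul_of_nonneg_right hineq hsσ.le
    rw [hM] at h1
    have h2 : 0 ≤ sin rk * sin ri * sin rj * (cos Θi + cos Θj) → False → False := fun _ f => f
    by_contra hS
    push_neg at hS
    have h3 := mul_pos (mul_pos (mul_pos hsk hsi) hsj) hS
    linarith
  have hπle : π ≤ Θi + Θj := by
    by_contra hcon
    push_neg at hcon
    have h2 : cos (π - Θi) < cos Θj :=
      Real.cos_lt_cos_of_nonneg_of_le_pi hΘj.1 (by linarith [hΘi.1]) (by linarith)
    rw [Real.cos_pi_sub] at h2
    linarith
  have hiff1 : ⟪zk, p⟫ = cos rk ↔ cos Θi + cos Θj = 0 := by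
    constructor
    · intro h
      rw [h] at hM
      have h9 : sin rk * sin ri * sin rj * (cos Θi + cos Θj) = 0 := by linarith
      rcases mul_eq_zero.mp h9 with h10 | h10
      · exact absurd h10 (mul_ne_zero (mul_ne_zero hsk.ne' hsi.ne') hsj.ne')
      · exact h10
    · intro h
      rw [h, mul_zero, sub_zero] at hM
      exact mul_right_cancel₀ hsσ.ne' hM
  refine ⟨hπle, ?_, ?_⟩
  · intro heq
    have hzkp : ⟪zk, p⟫ = cos rk := by
      apply hiff1.2
      have hθ : Θj = π - Θi := by linarith
      rw [hθ, Real.cos_pi_sub]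
      ring
    exact ⟨p, ⟨⟨(mem_sphCircle_iff' hzi hri0.le hriπ.le).2 ⟨hp1, hbi⟩,
      (mem_sphCircle_iff' hzj hrj0.le hrjπ.le).2 ⟨hp1, hbj⟩⟩,
      (mem_sphCircle_iff' hzk hrk0.le hrkπ.le).2 ⟨hp1, hzkp⟩⟩⟩
  · rintro ⟨q, ⟨⟨hq1, hq2⟩, hq3⟩⟩
    rw [mem_sphCircle_iff' hzi hri0.le hriπ.le] at hq1
    rw [mem_sphCircle_iff' hzj hrj0.le hrjπ.le] at hq2
    rw [mem_sphCircle_iff' hzk hrk0.le hrkπ.le] at hq3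
    have hqp : q = p := huniq q hq1.1 hq1.2.ge hq2.2.ge
    have hzkp : ⟪zk, p⟫ = cos rk := by rw [← hqp]; exact hq3.2
    have hS0 : cos Θi + cos Θj = 0 := hiff1.1 hzkp
    have hcpi : cos Θj = cos (π - Θi) := by
      rw [Real.cos_pi_sub]
      linarith
    have hfin : Θj = π - Θi :=
      Real.injOn_cos ⟨hΘj.1, hΘj.2.le⟩ ⟨by linarith [hΘi.2], by linarith [hΘi.1]⟩ hcpi
    linarith
end

section
/- Let $D_i, D_j, D_k$ be three pairwise intersecting closed disks on the Riemann sphere with exterior intersection angles $\Theta_i, \Theta_j, \Theta_k \in [0,\pi)$, and suppose the union of their interiors is a proper subset of the sphere. If $\Theta_i + \Theta_j + \Theta_k < \pi$, then $D_i \cap D_j \cap D_k = \emptyset$. -/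
open Real
open scoped RealInnerProductSpace

/-- The interior (open spherical disk) of the spherical disk with center `z`, radius `r`. -/
noncomputable def sphDiskInt (z : EuclideanSpace ℝ (Fin 3)) (r : ℝ) :
    Set (EuclideanSpace ℝ (Fin 3)) :=
  {x | x ∈ Metric.sphere (0 : EuclideanSpace ℝ (Fin 3)) 1 ∧ sphDist z x < r}

/-
Represent a spherical disk of center `z` and radius `r ∈ (0, π)` by the unit spacelike vector
`(z, cos r) / sin r` of Minkowski space `ℝ³ × ℝ`, and a point `x` of the sphere by the null vector
`(x, 1)`: then `x` lies in the disk iff their Minkowski product is `≥ 0`, and outside the open disk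
iff it is `≤ 0`. The Gram matrix of the three disk vectors has entries `1` and `-cos Θ`; when the
angles sum to less than `π` its determinant is negative and its adjugate is entrywise nonnegative,
so its inverse is entrywise nonpositive. Hence the span of the disk vectors contains a timelike
vector and its orthogonal complement is spacelike. Splitting a point `x` of the triple intersection
and a point `y` outside the union of the open disks along this decomposition and using the
(reverse) Cauchy–Schwarz inequalities gives `⟪x, y⟫ ≥ 1`, so `x = y` is on all three boundary
circles; but a null vector orthogonal to a timelike vector is zero.
-/

open Matrix

lemma Matrix.mulVec_dotProduct_nonneg_of_nonpos {m n : Type*} [Fintype m] [Fintype n]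
    {A : Matrix m n ℝ} (hA : ∀ i j, A i j ≤ 0) {e : n → ℝ} {f : m → ℝ} (he : 0 ≤ e)
    (hf : f ≤ 0) : 0 ≤ A *ᵥ e ⬝ᵥ f := by
  have hAe : A *ᵥ e ≤ 0 := fun i =>
    Finset.sum_nonpos fun j _ => mul_nonpos_of_nonpos_of_nonneg (hA i j) (he j)
  simpa using dotProduct_nonneg_of_nonneg (neg_nonneg.2 hAe) (neg_nonneg.2 hf)

namespace LinearMap.BilinForm

variable {ι V : Type*} [Fintype ι] [AddCommGroup V] [Module ℝ V]
  (B : LinearMap.BilinForm ℝ V) (v : ι → V)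

def gram : Matrix ι ι ℝ := Matrix.of fun i j => B (v i) (v j)

lemma sum_smul_apply (c : ι → ℝ) (w : V) :
    B (∑ j, c j • v j) w = ∑ j, c j * B (v j) w := by
  simp [map_sum, LinearMap.sum_apply]

lemma apply_sum_smul (c : ι → ℝ) (i : ι) :
    B (v i) (∑ j, c j • v j) = (B.gram v *ᵥ c) i := by
  simp [gram, Matrix.mulVec, dotProduct, mul_comm]

lemma sum_smul_apply_sum_smul (c d : ι → ℝ) :
    B (∑ j, c j • v j) (∑ j, d j • v j) = c ⬝ᵥ (B.gram v *ᵥ d) := by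
  simp only [sum_smul_apply, apply_sum_smul, dotProduct]

variable [DecidableEq ι]

noncomputable def gramProj (w : V) : V :=
  ∑ j, ((B.gram v)⁻¹ *ᵥ fun i => B (v i) w) j • v j

variable {B v}

lemma apply_gramProj (hG : IsUnit (B.gram v).det) (w : V) (i : ι) :
    B (v i) (B.gramProj v w) = B (v i) w := by
  rw [gramProj, apply_sum_smul, mulVec_mulVec, mul_nonsing_inv _ hG,
    one_mulVec]

lemma gramProj_apply_gramProj (hG : IsUnit (B.gram v).det) (w w' : V) :
    B (B.gramProj v w) (B.gramProj v w') =
      ((B.gram v)⁻¹ *ᵥ fun i => B (v i) w) ⬝ᵥ fun i => B (v i) w' := by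
  rw [gramProj, gramProj, sum_smul_apply_sum_smul, mulVec_mulVec,
    mul_nonsing_inv _ hG, one_mulVec]

lemma exists_sum_smul_self_neg [Nonempty ι] (hG : IsUnit (B.gram v).det)
    (hinv : ∀ i j, (B.gram v)⁻¹ i j ≤ 0) :
    ∃ c : ι → ℝ, B (∑ j, c j • v j) (∑ j, c j • v j) < 0 := by
  -- the value is the sum of the entries of `G⁻¹`, which are `≤ 0` and not all zero
  refine ⟨(B.gram v)⁻¹ *ᵥ 1, ?_⟩
  rw [sum_smul_apply_sum_smul, mulVec_mulVec, mul_nonsing_inv _ hG,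
    one_mulVec, dotProduct_one]
  have hrow : ∀ i, ((B.gram v)⁻¹ *ᵥ 1) i ≤ 0 := fun i =>
    Finset.sum_nonpos fun j _ => by simpa using hinv i j
  refine lt_of_le_of_ne (Finset.sum_nonpos fun i _ => hrow i) fun hsum => ?_
  have hzero : (B.gram v)⁻¹ = 0 := by
    ext i j
    have hi := (Finset.sum_eq_zero_iff_of_nonpos fun i _ => hrow i).1 hsum i (Finset.mem_univ _)
    have := (Finset.sum_eq_zero_iff_of_nonpos fun j _ => by simpa using hinv i j).1
      (by simpa [Matrix.mulVec, dotProduct] using hi) j (Finset.mem_univ _)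
    simpa using this
  simpa [hzero] using mul_nonsing_inv _ hG

end LinearMap.BilinForm

lemma sin_mul_sin_lt_cos_add_cos_mul_cos {a b c : ℝ} (ha : 0 ≤ a) (hb : 0 ≤ b) (hc : 0 ≤ c)
    (h : a + b + c < π) : sin b * sin c < cos a + cos b * cos c := by
  have := cos_lt_cos_of_nonneg_of_le_pi ha (by linarith) (show a < π - (b + c) by linarith)
  rw [cos_pi_sub, cos_add] at this
  linarith

noncomputable def angleMatrix (a b c : ℝ) : Matrix (Fin 3) (Fin 3) ℝ :=
  !![1, -cos c, -cos b; -cos c, 1, -cos a; -cos b, -cos a, 1]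

section AngleMatrix

variable {a b c : ℝ} (ha : 0 ≤ a) (hb : 0 ≤ b) (hc : 0 ≤ c) (h : a + b + c < π)
include ha hb hc h

lemma det_angleMatrix_neg : (angleMatrix a b c).det < 0 := by
  have hsin := sin_mul_sin_lt_cos_add_cos_mul_cos ha hb hc h
  have hsb := sin_nonneg_of_nonneg_of_le_pi hb (by linarith)
  have hsc := sin_nonneg_of_nonneg_of_le_pi hc (by linarith)
  have hdet : (angleMatrix a b c).det =
      sin b ^ 2 * sin c ^ 2 - (cos a + cos b * cos c) ^ 2 := by
    rw [angleMatrix, det_fin_three, sin_sq, sin_sq]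
    simp only [of_apply, cons_val', cons_val_zero, cons_val_one, cons_val_fin_one, cons_val]
    ring
  rw [hdet, sub_neg, ← mul_pow]
  exact pow_lt_pow_left₀ hsin (mul_nonneg hsb hsc) two_ne_zero

lemma adjugate_angleMatrix_nonneg (i j : Fin 3) : 0 ≤ (angleMatrix a b c).adjugate i j := by
  have hbc := sin_mul_sin_lt_cos_add_cos_mul_cos ha hb hc h
  have hac := sin_mul_sin_lt_cos_add_cos_mul_cos hb ha hc (by linarith)
  have hab := sin_mul_sin_lt_cos_add_cos_mul_cos hc ha hb (by linarith)
  have hsa := sin_nonneg_of_nonneg_of_le_pi ha (by linarith)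
  have hsb := sin_nonneg_of_nonneg_of_le_pi hb (by linarith)
  have hsc := sin_nonneg_of_nonneg_of_le_pi hc (by linarith)
  rw [angleMatrix, adjugate_fin_three]
  fin_cases i <;> fin_cases j <;>
    simp only [Fin.zero_eta, Fin.mk_one, Fin.reduceFinMk, of_apply, cons_val', cons_val_zero, cons_val_one, cons_val_fin_one, cons_val] <;>
    nlinarith [cos_sq_le_one a, cos_sq_le_one b, cos_sq_le_one c, mul_nonneg hsa hsb,
    mul_nonneg hsa hsc, mul_nonneg hsb hsc]

lemma angleMatrix_inv_nonpos (i j : Fin 3) : (angleMatrix a b c)⁻¹ i j ≤ 0 := by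
  rw [inv_def, Ring.inverse_eq_inv', Matrix.smul_apply, smul_eq_mul]
  exact mul_nonpos_of_nonpos_of_nonneg (inv_nonpos.2 (det_angleMatrix_neg ha hb hc h).le)
    (adjugate_angleMatrix_nonneg ha hb hc h i j)

end AngleMatrix

section Minkowski

variable {E : Type*} [NormedAddCommGroup E] [InnerProductSpace ℝ E]

noncomputable def minkowskiForm : LinearMap.BilinForm ℝ (E × ℝ) :=
  (innerₗ E).compl₁₂ (LinearMap.fst ℝ E ℝ) (LinearMap.fst ℝ E ℝ) -
    (LinearMap.mul ℝ ℝ).compl₁₂ (LinearMap.snd ℝ E ℝ) (LinearMap.snd ℝ E ℝ)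

@[simp]
lemma minkowskiForm_apply (u w : E × ℝ) : minkowskiForm u w = ⟪u.1, w.1⟫ - u.2 * w.2 := rfl

lemma minkowskiForm_isSymm : (minkowskiForm (E := E)).IsSymm :=
  ⟨fun u w => by simp [real_inner_comm, mul_comm]⟩

lemma eq_zero_or_minkowskiForm_self_pos {T h : E × ℝ} (hT : minkowskiForm T T < 0)
    (hTh : minkowskiForm T h = 0) : h = 0 ∨ 0 < minkowskiForm h h := by
  obtain ⟨t, τ⟩ := T
  obtain ⟨a, α⟩ := h
  simp only [minkowskiForm_apply, real_inner_self_eq_norm_sq] at hT hTh ⊢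
  have hcs : |⟪t, a⟫| ≤ ‖t‖ * ‖a‖ := abs_real_inner_le_norm t a
  rcases eq_or_ne a 0 with rfl | ha
  · have hτ : τ ≠ 0 := by rintro rfl; nlinarith [norm_nonneg t]
    left
    simp only [inner_zero_right, zero_sub, neg_eq_zero, mul_eq_zero, hτ, false_or] at hTh
    simp [hTh]
  · right
    have ha' : 0 < ‖a‖ := norm_pos_iff.2 ha
    rw [sub_eq_zero] at hTh
    have hsq : (τ * α) ^ 2 ≤ (‖t‖ * ‖a‖) ^ 2 := by
      rw [← hTh, ← sq_abs]; gcongr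
    by_contra! hle
    nlinarith [mul_le_mul_of_nonneg_left hle (sq_nonneg τ), mul_lt_mul_of_pos_right
      (show ‖t‖ ^ 2 < τ ^ 2 by linarith) (pow_pos ha' 2)]

lemma minkowskiForm_self_nonneg_of_orthogonal {T h : E × ℝ} (hT : minkowskiForm T T < 0)
    (hTh : minkowskiForm T h = 0) : 0 ≤ minkowskiForm h h := by
  rcases eq_zero_or_minkowskiForm_self_pos hT hTh with rfl | hpos
  · simp
  · exact hpos.le

lemma sq_minkowskiForm_le_of_orthogonal {T h h' : E × ℝ} (hT : minkowskiForm T T < 0)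
    (hTh : minkowskiForm T h = 0) (hTh' : minkowskiForm T h' = 0) :
    minkowskiForm h h' ^ 2 ≤ minkowskiForm h h * minkowskiForm h' h' := by
  have hdisc := discrim_le_zero (a := minkowskiForm h' h') (b := 2 * minkowskiForm h h')
    (c := minkowskiForm h h) fun s => by
      have := minkowskiForm_self_nonneg_of_orthogonal hT (h := h + s • h')
        (by simp [map_add, hTh, hTh'])
      simp only [map_add, map_smul, LinearMap.add_apply, LinearMap.smul_apply, smul_eq_mul,
        minkowskiForm_isSymm.eq h' h] at this
      linarith
  unfold discrim at hdisc
  linarith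

lemma minkowskiForm_self_mul_self_le_sq {P Q : E × ℝ} (hP : minkowskiForm P P ≤ 0)
    (hQ : minkowskiForm Q Q ≤ 0) :
    minkowskiForm P P * minkowskiForm Q Q ≤ minkowskiForm P Q ^ 2 := by
  obtain ⟨a, α⟩ := P
  obtain ⟨b, β⟩ := Q
  simp only [minkowskiForm_apply, real_inner_self_eq_norm_sq] at hP hQ ⊢
  have hcs : |⟪a, b⟫| ≤ ‖a‖ * ‖b‖ := abs_real_inner_le_norm a b
  have ha : ‖a‖ ≤ |α| := by simpa using sq_le_sq.1 (show ‖a‖ ^ 2 ≤ α ^ 2 by linarith)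
  have hb : ‖b‖ ≤ |β| := by simpa using sq_le_sq.1 (show ‖b‖ ^ 2 ≤ β ^ 2 by linarith)
  have hgap : |α| * |β| - ‖a‖ * ‖b‖ ≤ |α * β - ⟪a, b⟫| := by
    rw [← abs_mul]
    linarith [abs_sub_abs_le_abs_sub (α * β) ⟪a, b⟫]
  calc (‖a‖ ^ 2 - α * α) * (‖b‖ ^ 2 - β * β)
      ≤ (|α| * |β| - ‖a‖ * ‖b‖) ^ 2 := by
        nlinarith [sq_nonneg (|α| * ‖b‖ - ‖a‖ * |β|), sq_abs α, sq_abs β]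
    _ ≤ (⟪a, b⟫ - α * β) ^ 2 := by
        rw [← sq_abs (⟪a, b⟫ - α * β), abs_sub_comm]
        exact pow_le_pow_left₀ (by nlinarith [mul_le_mul ha hb (norm_nonneg b) (abs_nonneg α)]) hgap 2

section Gram

open LinearMap.BilinForm

variable {ι : Type*} [Fintype ι] [DecidableEq ι] [Nonempty ι] {v : ι → E × ℝ}
  (hG : IsUnit (minkowskiForm.gram v).det) (hinv : ∀ i j, (minkowskiForm.gram v)⁻¹ i j ≤ 0)
include hG hinv

lemma minkowskiForm_nonneg_of_inv_gram_nonpos {p q : E × ℝ}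
    (hp : minkowskiForm p p = 0) (hq : minkowskiForm q q = 0)
    (hvp : ∀ i, 0 ≤ minkowskiForm (v i) p) (hvq : ∀ i, minkowskiForm (v i) q ≤ 0) :
    0 ≤ minkowskiForm p q := by
  set B := minkowskiForm (E := E)
  have hsymm : ∀ u w, B u w = B w u := minkowskiForm_isSymm.eq
  set P := B.gramProj v p
  set Q := B.gramProj v q
  set h := p - P
  set h' := q - Q
  have hvh : ∀ i, B (v i) h = 0 := fun i => by simp [h, P, apply_gramProj hG]
  have hvh' : ∀ i, B (v i) h' = 0 := fun i => by simp [h', Q, apply_gramProj hG]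
  have hPh' : B P h' = 0 := by simp [P, gramProj, hvh']
  have hQh : B Q h = 0 := by simp [Q, gramProj, hvh]
  have hPh : B P h = 0 := by simp [P, gramProj, hvh]
  have hQh' : B Q h' = 0 := by simp [Q, gramProj, hvh']
  obtain ⟨c, hT⟩ := exists_sum_smul_self_neg hG hinv
  have hTh : B (∑ j, c j • v j) h = 0 := by simp [hvh]
  have hTh' : B (∑ j, c j • v j) h' = 0 := by simp [hvh']
  have hp_eq : p = P + h := by simp [h]
  have hq_eq : q = Q + h' := by simp [h']
  have hpq : B p q = B P Q + B h h' := by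
    rw [hp_eq, hq_eq]; simp [hPh', hsymm h Q, hQh]
  have hPP : B P P = -B h h := by
    rw [hp_eq] at hp; simp [hPh, hsymm h P] at hp; linarith
  have hQQ : B Q Q = -B h' h' := by
    rw [hq_eq] at hq; simp [hQh', hsymm h' Q] at hq; linarith
  have hPQ : 0 ≤ B P Q := by
    rw [gramProj_apply_gramProj hG]
    exact Matrix.mulVec_dotProduct_nonneg_of_nonpos hinv hvp hvq
  have hsq : B h h' ^ 2 ≤ B P Q ^ 2 :=
    calc B h h' ^ 2 ≤ B h h * B h' h' := sq_minkowskiForm_le_of_orthogonal hT hTh hTh'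
      _ = B P P * B Q Q := by rw [hPP, hQQ]; ring
      _ ≤ B P Q ^ 2 := minkowskiForm_self_mul_self_le_sq
          (hPP ▸ neg_nonpos.2 (minkowskiForm_self_nonneg_of_orthogonal hT hTh))
          (hQQ ▸ neg_nonpos.2 (minkowskiForm_self_nonneg_of_orthogonal hT hTh'))
  rw [hpq]
  linarith [(abs_le_of_sq_le_sq' hsq hPQ).1]

lemma eq_zero_of_inv_gram_nonpos {p : E × ℝ} (hp : minkowskiForm p p = 0)
    (hvp : ∀ i, minkowskiForm (v i) p = 0) : p = 0 := by
  obtain ⟨c, hT⟩ := exists_sum_smul_self_neg hG hinv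
  exact (eq_zero_or_minkowskiForm_self_pos hT (by simp [hvp])).resolve_right hp.not_gt

end Gram

lemma minkowskiForm_self_eq_zero_of_norm_eq_one {x : E} (hx : ‖x‖ = 1) :
    minkowskiForm (x, (1 : ℝ)) (x, 1) = 0 := by
  simp [hx]

lemma eq_of_minkowskiForm_nonneg {x y : E} (hx : ‖x‖ = 1) (hy : ‖y‖ = 1)
    (h : 0 ≤ minkowskiForm (x, (1 : ℝ)) (y, 1)) : x = y := by
  rw [← inner_eq_one_iff_of_norm_eq_one (𝕜 := ℝ) hx hy]
  have := real_inner_le_norm x y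
  simp only [minkowskiForm_apply, mul_one] at h
  rw [hx, hy] at this
  linarith

noncomputable def diskVector (z : E) (r : ℝ) : E × ℝ := (sin r)⁻¹ • (z, cos r)

lemma minkowskiForm_diskVector_point (z x : E) (r : ℝ) :
    minkowskiForm (diskVector z r) (x, 1) = (⟪z, x⟫ - cos r) / sin r := by
  simp [diskVector, real_inner_smul_left]
  ring

lemma minkowskiForm_diskVector_self {z : E} (hz : ‖z‖ = 1) {r : ℝ} (hr : sin r ≠ 0) :
    minkowskiForm (diskVector z r) (diskVector z r) = 1 := by
  simp only [diskVector, minkowskiForm_apply, Prod.smul_fst, Prod.smul_snd, smul_eq_mul]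
  rw [real_inner_smul_left, real_inner_smul_right, real_inner_self_eq_norm_sq, hz]
  field_simp
  linear_combination -sin_sq_add_cos_sq r

lemma minkowskiForm_diskVector {z z' : E} {r r' θ : ℝ} (hr : sin r ≠ 0) (hr' : sin r' ≠ 0)
    (h : ⟪z, z'⟫ = cos r * cos r' - cos θ * sin r * sin r') :
    minkowskiForm (diskVector z r) (diskVector z' r') = -cos θ := by
  simp [diskVector, real_inner_smul_left, real_inner_smul_right, h]
  field_simp
  ring

lemma gram_diskVector {zi zj zk : E} (hzi : ‖zi‖ = 1) (hzj : ‖zj‖ = 1) (hzk : ‖zk‖ = 1)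
    {ri rj rk Θi Θj Θk : ℝ} (hsi : sin ri ≠ 0) (hsj : sin rj ≠ 0) (hsk : sin rk ≠ 0)
    (hij : ⟪zi, zj⟫ = cos ri * cos rj - cos Θk * sin ri * sin rj)
    (hjk : ⟪zj, zk⟫ = cos rj * cos rk - cos Θi * sin rj * sin rk)
    (hki : ⟪zk, zi⟫ = cos rk * cos ri - cos Θj * sin rk * sin ri) :
    minkowskiForm.gram ![diskVector zi ri, diskVector zj rj, diskVector zk rk] =
      angleMatrix Θi Θj Θk := by
  have hii := minkowskiForm_diskVector_self hzi hsi
  have hjj := minkowskiForm_diskVector_self hzj hsj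
  have hkk := minkowskiForm_diskVector_self hzk hsk
  have hij' := minkowskiForm_diskVector hsi hsj hij
  have hjk' := minkowskiForm_diskVector hsj hsk hjk
  have hki' := minkowskiForm_diskVector hsk hsi hki
  have hji' := minkowskiForm_diskVector (z := zj) (z' := zi) (θ := Θk) hsj hsi
    (by rw [real_inner_comm, hij]; ring)
  have hkj' := minkowskiForm_diskVector (z := zk) (z' := zj) (θ := Θi) hsk hsj
    (by rw [real_inner_comm, hjk]; ring)
  have hik' := minkowskiForm_diskVector (z := zi) (z' := zk) (θ := Θj) hsi hsk
    (by rw [real_inner_comm, hki]; ring)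
  ext a b
  fin_cases a <;> fin_cases b <;>
    simp [LinearMap.BilinForm.gram, angleMatrix, -minkowskiForm_apply, *]

end Minkowski

section Sphere

variable {x y z : EuclideanSpace ℝ (Fin 3)} {r : ℝ}

lemma cos_sphDist (hx : x ∈ Metric.sphere 0 1) (hy : y ∈ Metric.sphere 0 1) :
    cos (sphDist x y) = ⟪x, y⟫ := by
  rw [mem_sphere_zero_iff_norm] at hx hy
  have := abs_real_inner_le_norm x y
  rw [hx, hy, one_mul, abs_le] at this
  exact cos_arccos this.1 this.2

lemma minkowskiForm_diskVector_nonneg_of_mem_sphDisk (hz : z ∈ Metric.sphere 0 1)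
    (hr : r ∈ Set.Ioo 0 π) (hx : x ∈ sphDisk z r) :
    0 ≤ minkowskiForm (diskVector z r) (x, 1) := by
  rw [minkowskiForm_diskVector_point, ← cos_sphDist hz hx.1]
  exact div_nonneg (sub_nonneg.2 (cos_le_cos_of_nonneg_of_le_pi (arccos_nonneg _) hr.2.le hx.2))
    (sin_pos_of_pos_of_lt_pi hr.1 hr.2).le

lemma minkowskiForm_diskVector_nonpos_of_notMem_sphDiskInt (hz : z ∈ Metric.sphere 0 1)
    (hr : r ∈ Set.Ioo 0 π) (hy : y ∈ Metric.sphere 0 1) (hy' : y ∉ sphDiskInt z r) :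
    minkowskiForm (diskVector z r) (y, 1) ≤ 0 := by
  rw [minkowskiForm_diskVector_point, ← cos_sphDist hz hy]
  refine div_nonpos_of_nonpos_of_nonneg (sub_nonpos.2 ?_) (sin_pos_of_pos_of_lt_pi hr.1 hr.2).le
  exact cos_le_cos_of_nonneg_of_le_pi hr.1.le (arccos_le_pi _) (not_lt.1 fun h => hy' ⟨hy, h⟩)

end Sphere

theorem triple_intersection_empty_general
    (zi zj zk : EuclideanSpace ℝ (Fin 3))
    (hzi : zi ∈ Metric.sphere (0 : EuclideanSpace ℝ (Fin 3)) 1)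
    (hzj : zj ∈ Metric.sphere (0 : EuclideanSpace ℝ (Fin 3)) 1)
    (hzk : zk ∈ Metric.sphere (0 : EuclideanSpace ℝ (Fin 3)) 1)
    (ri rj rk Θi Θj Θk : ℝ)
    (hri : ri ∈ Set.Ioo 0 π) (hrj : rj ∈ Set.Ioo 0 π) (hrk : rk ∈ Set.Ioo 0 π)
    (hΘi : Θi ∈ Set.Ico 0 π) (hΘj : Θj ∈ Set.Ico 0 π) (hΘk : Θk ∈ Set.Ico 0 π)
    -- exterior intersection angles: `Θ_i` for the pair `(D_j, D_k)`, etc.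
    (hij : cos (sphDist zi zj) = cos ri * cos rj - cos Θk * sin ri * sin rj)
    (hjk : cos (sphDist zj zk) = cos rj * cos rk - cos Θi * sin rj * sin rk)
    (hki : cos (sphDist zk zi) = cos rk * cos ri - cos Θj * sin rk * sin ri)
    -- the union of the open disks is a proper subset of the sphere
    (hproper : sphDiskInt zi ri ∪ sphDiskInt zj rj ∪ sphDiskInt zk rk
        ⊂ Metric.sphere (0 : EuclideanSpace ℝ (Fin 3)) 1)
    (hsum : Θi + Θj + Θk < π) :
    sphDisk zi ri ∩ sphDisk zj rj ∩ sphDisk zk rk = ∅ := by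
  rw [Set.eq_empty_iff_forall_notMem]
  rintro x ⟨⟨hxi, hxj⟩, hxk⟩
  obtain ⟨y, hy, hyU⟩ := Set.exists_of_ssubset hproper
  simp only [Set.mem_union, not_or] at hyU
  obtain ⟨⟨hyi, hyj⟩, hyk⟩ := hyU
  have hsin {r : ℝ} (hr : r ∈ Set.Ioo 0 π) : sin r ≠ 0 := (sin_pos_of_pos_of_lt_pi hr.1 hr.2).ne'
  have hgram := gram_diskVector (mem_sphere_zero_iff_norm.1 hzi) (mem_sphere_zero_iff_norm.1 hzj)
    (mem_sphere_zero_iff_norm.1 hzk) (hsin hri) (hsin hrj) (hsin hrk)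
    (cos_sphDist hzi hzj ▸ hij) (cos_sphDist hzj hzk ▸ hjk) (cos_sphDist hzk hzi ▸ hki)
  have hG := hgram ▸ (det_angleMatrix_neg hΘi.1 hΘj.1 hΘk.1 hsum).ne.isUnit
  have hinv := hgram ▸ angleMatrix_inv_nonpos hΘi.1 hΘj.1 hΘk.1 hsum
  have hvx : ∀ a, 0 ≤ minkowskiForm
      (![diskVector zi ri, diskVector zj rj, diskVector zk rk] a) (x, 1) := fun a => by
    fin_cases a <;> apply minkowskiForm_diskVector_nonneg_of_mem_sphDisk <;> assumption
  have hvy : ∀ a, minkowskiForm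
      (![diskVector zi ri, diskVector zj rj, diskVector zk rk] a) (y, 1) ≤ 0 := fun a => by
    fin_cases a <;> apply minkowskiForm_diskVector_nonpos_of_notMem_sphDiskInt <;> assumption
  have hx1 := mem_sphere_zero_iff_norm.1 hxi.1
  have hy1 := mem_sphere_zero_iff_norm.1 hy
  obtain rfl : x = y := eq_of_minkowskiForm_nonneg hx1 hy1
    (minkowskiForm_nonneg_of_inv_gram_nonpos hG hinv (minkowskiForm_self_eq_zero_of_norm_eq_one hx1)
      (minkowskiForm_self_eq_zero_of_norm_eq_one hy1) hvx hvy)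
  have := eq_zero_of_inv_gram_nonpos hG hinv (minkowskiForm_self_eq_zero_of_norm_eq_one hx1)
    fun a => le_antisymm (hvy a) (hvx a)
  simp at this

/-- Lemma 2.7: if three pairwise intersecting disks have exterior intersection angles
summing to less than `π` and the union of their interiors is a proper subset of the
sphere, then the triple intersection is empty. -/
theorem triple_intersection_empty
    (zi zj zk : EuclideanSpace ℝ (Fin 3))
    (hzi : zi ∈ Metric.sphere (0 : EuclideanSpace ℝ (Fin 3)) 1)
    (hzj : zj ∈ Metric.sphere (0 : EuclideanSpace ℝ (Fin 3)) 1)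
    (hzk : zk ∈ Metric.sphere (0 : EuclideanSpace ℝ (Fin 3)) 1)
    (ri rj rk Θi Θj Θk : ℝ)
    (hri : ri ∈ Set.Ioo 0 π) (hrj : rj ∈ Set.Ioo 0 π) (hrk : rk ∈ Set.Ioo 0 π)
    (hΘi : Θi ∈ Set.Ico 0 π) (hΘj : Θj ∈ Set.Ico 0 π) (hΘk : Θk ∈ Set.Ico 0 π)
    -- exterior intersection angles: `Θ_i` for the pair `(D_j, D_k)`, etc.
    (hij : cos (sphDist zi zj) = cos ri * cos rj - cos Θk * sin ri * sin rj)
    (hjk : cos (sphDist zj zk) = cos rj * cos rk - cos Θi * sin rj * sin rk)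
    (hki : cos (sphDist zk zi) = cos rk * cos ri - cos Θj * sin rk * sin ri)
    -- the disks pairwise intersect
    (hmij : (sphDisk zi ri ∩ sphDisk zj rj).Nonempty)
    (hmjk : (sphDisk zj rj ∩ sphDisk zk rk).Nonempty)
    (hmki : (sphDisk zk rk ∩ sphDisk zi ri).Nonempty)
    -- the union of the open disks is a proper subset of the sphere
    (hproper : sphDiskInt zi ri ∪ sphDiskInt zj rj ∪ sphDiskInt zk rk
        ⊂ Metric.sphere (0 : EuclideanSpace ℝ (Fin 3)) 1)
    (hsum : Θi + Θj + Θk < π) :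
    sphDisk zi ri ∩ sphDisk zj rj ∩ sphDisk zk rk = ∅ :=
  triple_intersection_empty_general zi zj zk hzi hzj hzk ri rj rk Θi Θj Θk hri hrj hrk hΘi hΘj hΘk
    hij hjk hki hproper hsum
end

section
/- Let $r_i, r_j, r_k \in (0,\pi)$ and $\Theta_i, \Theta_j, \Theta_k \in (0,\pi)$ with $\Theta_i + \Theta_j + \Theta_k = \pi$, and define $l_i = \arccos(\cos r_j \cos r_k - \cos\Theta_i \sin r_j \sin r_k)$ and $l_j, l_k$ cyclically. If $r_i + r_j + r_k < \pi$, then $l_i + l_j + l_k < 2\pi$. -/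
open Real

lemma arccos_aux (r s Θ : ℝ) (hr : r ∈ Set.Ioo 0 π) (hs : s ∈ Set.Ioo 0 π)
    (hΘ : Θ ∈ Set.Ioo 0 π) (hrs : r + s ≤ π) :
    Real.arccos (cos r * cos s - cos Θ * sin r * sin s) ≤ r + s := by
  have hcos : cos (r + s) ≤ cos r * cos s - cos Θ * sin r * sin s := by
    rw [Real.cos_add]
    have h1 : cos Θ ≤ 1 := Real.cos_le_one Θ
    have h2 : 0 < sin r := Real.sin_pos_of_pos_of_lt_pi hr.1 hr.2
    have h3 : 0 < sin s := Real.sin_pos_of_pos_of_lt_pi hs.1 hs.2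
    nlinarith [mul_le_of_le_one_left (le_of_lt (mul_pos h2 h3)) h1]
  calc Real.arccos (cos r * cos s - cos Θ * sin r * sin s)
      ≤ Real.arccos (cos (r + s)) := by
        unfold Real.arccos
        have := Real.monotone_arcsin hcos
        linarith
    _ = r + s := Real.arccos_cos (by linarith [hr.1, hs.1]) hrs

/-- Lemma 2.3 (last assertion): for a spherical three-circle configuration with angle
sum exactly `π` and radii summing to less than `π`, the side lengths sum to less
than `2π`. -/
theorem side_sum_lt_two_pi
    (ri rj rk Θi Θj Θk : ℝ)
    (hri : ri ∈ Set.Ioo 0 π) (hrj : rj ∈ Set.Ioo 0 π) (hrk : rk ∈ Set.Ioo 0 π)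
    (hΘi : Θi ∈ Set.Ioo 0 π) (hΘj : Θj ∈ Set.Ioo 0 π) (hΘk : Θk ∈ Set.Ioo 0 π)
    (hsum : Θi + Θj + Θk = π)
    (hrsum : ri + rj + rk < π) :
    Real.arccos (cos rj * cos rk - cos Θi * sin rj * sin rk)
      + Real.arccos (cos rk * cos ri - cos Θj * sin rk * sin ri)
      + Real.arccos (cos ri * cos rj - cos Θk * sin ri * sin rj) < 2 * π := by
  have h1 := arccos_aux rj rk Θi hrj hrk hΘi (by linarith [hri.1])
  have h2 := arccos_aux rk ri Θj hrk hri hΘj (by linarith [hrj.1])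
  have h3 := arccos_aux ri rj Θk hri hrj hΘk (by linarith [hrk.1])
  linarith
end

section
/- Let $\mathcal{T}$ be a triangulation of a closed surface, $V_0$ a set of vertices, $S(V_0)$ the union of open simplices incident to at least one vertex of $V_0$, $E(V_0)$ and $F(V_0)$ the sets of edges and triangles with at least one vertex in $V_0$, $F_m(V_0)$ the set of triangles with exactly $m$ vertices in $V_0$ ($m=1,2,3$), and $Lk(V_0)$ the set of pairs $(e,u)$ where $e$ is an edge with no endpoint in $V_0$, $u \in V_0$, and $e$ together with $u$ forms a triangle. Then $2|V_0| - |F_2(V_0)| - |F_3(V_0)| = 2\chi(S(V_0))$, where $\chi(S(V_0)) = |V_0| - |E(V_0)| + |F(V_0)|$. -/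
open scoped Classical

open Finset

/-- The underlying two-element finset of an unordered pair. -/
def sym2Finset {V : Type*} [DecidableEq V] : Sym2 V → Finset V :=
  Sym2.lift ⟨fun a b => {a, b}, fun a b => Finset.pair_comm a b⟩

@[simp] lemma sym2Finset_mk {V : Type*} [DecidableEq V] (a b : V) :
    sym2Finset s(a, b) = {a, b} := rfl

@[simp] lemma mem_sym2Finset {V : Type*} [DecidableEq V] (e : Sym2 V) (x : V) :
    x ∈ sym2Finset e ↔ x ∈ e := by
  induction e using Sym2.ind with
  | _ a b => simp [Sym2.mem_iff]

lemma card_sym2Finset {V : Type*} [DecidableEq V] (e : Sym2 V) (h : ¬ e.IsDiag) :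
    (sym2Finset e).card = 2 := by
  induction e using Sym2.ind with
  | _ a b =>
    have hab : a ≠ b := by simpa using h
    simp [Finset.card_pair hab]

/-- The combinatorial core of Proposition 3.6: in a triangulation of a closed surface,
for any vertex set `V₀`, `2|V₀| - |F₂(V₀)| - |F₃(V₀)| = 2 χ(S(V₀))`, where
`χ(S(V₀)) = |V₀| - |E(V₀)| + |F(V₀)|`. -/
theorem euler_char_of_star
    {V : Type*} [Fintype V] [DecidableEq V]
    (G : SimpleGraph V) [DecidableRel G.Adj] (faces : Finset (Finset V))
    -- `(G, faces)` is a triangulation of a closed surface: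
    (hface3 : ∀ f ∈ faces, f.card = 3)
    (hfaceedge : ∀ f ∈ faces, ∀ u ∈ f, ∀ v ∈ f, u ≠ v → G.Adj u v)
    (hedge2 : ∀ e ∈ G.edgeFinset,
      (faces.filter (fun f => ∀ x ∈ e, x ∈ f)).card = 2)
    (V0 : Finset V) :
    2 * (V0.card : ℤ)
        - ((faces.filter (fun f => (f ∩ V0).card = 2)).card : ℤ)
        - ((faces.filter (fun f => (f ∩ V0).card = 3)).card : ℤ)
      = 2 * ((V0.card : ℤ)
          - ((G.edgeFinset.filter (fun e => ∃ x ∈ e, x ∈ V0)).card : ℤ)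
          + ((faces.filter (fun f => (f ∩ V0).Nonempty)).card : ℤ)) := by
  classical
  set F : Finset (Finset V) := faces.filter (fun f => (f ∩ V0).Nonempty) with hFdef
  set E : Finset (Sym2 V) := G.edgeFinset.filter (fun e => ∃ x ∈ e, x ∈ V0) with hEdef
  set F1 : Finset (Finset V) := faces.filter (fun f => (f ∩ V0).card = 1) with hF1def
  set F2 : Finset (Finset V) := faces.filter (fun f => (f ∩ V0).card = 2) with hF2def
  set F3 : Finset (Finset V) := faces.filter (fun f => (f ∩ V0).card = 3) with hF3def
  -- interaction of cardinalities
  have hkle : ∀ f ∈ faces, (f ∩ V0).card ≤ 3 := fun f hf =>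
    le_trans (Finset.card_le_card inter_subset_left) (hface3 f hf).le
  -- Step 1 : |F| = |F1| + |F2| + |F3|
  have hsplit : F.card = F1.card + F2.card + F3.card := by
    have h1 : F = faces.filter
        (fun f => (f ∩ V0).card = 1 ∨ (f ∩ V0).card = 2 ∨ (f ∩ V0).card = 3) := by
      rw [hFdef]
      apply Finset.filter_congr
      intro f hf
      have := hkle f hf
      rw [← Finset.card_pos]
      constructor
      · intro h; omega
      · intro h; omega
    rw [h1, Finset.filter_or, Finset.filter_or]
    rw [Finset.card_union_of_disjoint, Finset.card_union_of_disjoint]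
    · rw [hF1def, hF2def, hF3def]; ring
    · apply Finset.disjoint_filter_filter'
      rw [disjoint_iff_inf_le]; rintro f ⟨h2, h3⟩; omega
    · rw [Finset.disjoint_union_right]
      constructor
      · apply Finset.disjoint_filter_filter'
        rw [disjoint_iff_inf_le]; rintro f ⟨h2, h3⟩; omega
      · apply Finset.disjoint_filter_filter'
        rw [disjoint_iff_inf_le]; rintro f ⟨h2, h3⟩; omega
  -- Step 2 : 2|E| + |F1| = 3|F|
  have hmain : 2 * E.card + F1.card = 3 * F.card := by
    -- count pairs (f, s) with f ∈ F, s a 2-subset of f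
    have hcount : ∀ f ∈ F,
        ((Finset.powersetCard 2 f).filter (fun s => (s ∩ V0).Nonempty)).card
          + ((Finset.powersetCard 2 f).filter (fun s => ¬ (s ∩ V0).Nonempty)).card = 3 := by
      intro f hf
      have hf3 : f.card = 3 := hface3 f (Finset.mem_of_mem_filter f hf)
      rw [Finset.card_filter_add_card_filter_not, Finset.card_powersetCard, hf3]
      rfl
    -- subsets of f avoiding V0
    have hcount2 : ∀ f ∈ F,
        ((Finset.powersetCard 2 f).filter (fun s => ¬ (s ∩ V0).Nonempty)).card
          = if (f ∩ V0).card = 1 then 1 else 0 := by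
      intro f hf
      have hfF : f ∈ faces := Finset.mem_of_mem_filter f hf
      have hf3 : f.card = 3 := hface3 f hfF
      have hne : (f ∩ V0).Nonempty := (Finset.mem_filter.mp hf).2
      have hpos : 0 < (f ∩ V0).card := Finset.card_pos.mpr hne
      have hle := hkle f hfF
      have heq : (Finset.powersetCard 2 f).filter (fun s => ¬ (s ∩ V0).Nonempty)
          = Finset.powersetCard 2 (f \ V0) := by
        ext s
        simp only [Finset.mem_filter, Finset.mem_powersetCard, Finset.not_nonempty_iff_eq_empty,
          Finset.subset_sdiff, ← Finset.disjoint_iff_inter_eq_empty]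
        tauto
      have hsd : (f \ V0).card = 3 - (f ∩ V0).card := by
        have := Finset.card_inter_add_card_sdiff f V0
        omega
      rw [heq, Finset.card_powersetCard, hsd]
      interval_cases h : (f ∩ V0).card <;> simp
    -- subsets of f meeting V0 correspond to edges of E contained in f
    have hcount1 : ∀ f ∈ F,
        ((Finset.powersetCard 2 f).filter (fun s => (s ∩ V0).Nonempty)).card
          = (E.filter (fun e => ∀ x ∈ e, x ∈ f)).card := by
      intro f hf
      have hfF : f ∈ faces := Finset.mem_of_mem_filter f hf
      refine (Finset.card_bij (fun e _ => sym2Finset e) ?_ ?_ ?_).symm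
      · intro e he
        have heE : e ∈ G.edgeFinset := Finset.mem_of_mem_filter e (Finset.mem_of_mem_filter e he)
        have hnd : ¬ e.IsDiag :=
          G.not_isDiag_of_mem_edgeSet (SimpleGraph.mem_edgeFinset.mp heE)
        have hsub : ∀ x ∈ e, x ∈ f := (Finset.mem_filter.mp he).2
        obtain ⟨x, hxe, hxV⟩ := (Finset.mem_filter.mp (Finset.mem_of_mem_filter e he)).2
        refine Finset.mem_filter.mpr ⟨Finset.mem_powersetCard.mpr ⟨?_, card_sym2Finset e hnd⟩, ?_⟩
        · intro x hx
          exact hsub x ((mem_sym2Finset e x).mp hx)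
        · exact ⟨x, Finset.mem_inter.mpr ⟨(mem_sym2Finset e x).mpr hxe, hxV⟩⟩
      · intro e1 h1 e2 h2 heq
        apply Sym2.ext
        intro x
        rw [← mem_sym2Finset, ← mem_sym2Finset, heq]
      · intro s hs
        obtain ⟨hmem, hne⟩ := Finset.mem_filter.mp hs
        obtain ⟨hsub, hcard⟩ := Finset.mem_powersetCard.mp hmem
        obtain ⟨a, b, hab, rfl⟩ := Finset.card_eq_two.mp hcard
        have ha : a ∈ f := hsub (by simp)
        have hb : b ∈ f := hsub (by simp)
        have hadj : G.Adj a b := hfaceedge f hfF a ha b hb hab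
        obtain ⟨x, hx⟩ := hne
        have hx' := Finset.mem_inter.mp hx
        refine ⟨s(a, b), ?_, by simp⟩
        refine Finset.mem_filter.mpr ⟨Finset.mem_filter.mpr ⟨SimpleGraph.mem_edgeFinset.mpr hadj, ?_⟩, ?_⟩
        · refine ⟨x, ?_, hx'.2⟩
          have := hx'.1
          simp only [Finset.mem_insert, Finset.mem_singleton] at this
          rcases this with rfl | rfl <;> simp
        · intro y hy
          rcases Sym2.mem_iff.mp hy with rfl | rfl
          · exact ha
          · exact hb
    -- swap the double counting
    have hswap : ∑ f ∈ F, (E.filter (fun e => ∀ x ∈ e, x ∈ f)).card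
        = ∑ e ∈ E, (F.filter (fun f => ∀ x ∈ e, x ∈ f)).card := by
      simp only [Finset.card_filter]
      exact Finset.sum_comm
    have hfiber : ∀ e ∈ E, (F.filter (fun f => ∀ x ∈ e, x ∈ f)).card = 2 := by
      intro e he
      have heE : e ∈ G.edgeFinset := Finset.mem_of_mem_filter e he
      obtain ⟨x, hxe, hxV⟩ := (Finset.mem_filter.mp he).2
      have heq : F.filter (fun f => ∀ x ∈ e, x ∈ f)
          = faces.filter (fun f => ∀ x ∈ e, x ∈ f) := by
        rw [hFdef, Finset.filter_filter]
        apply Finset.filter_congr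
        intro f hf
        constructor
        · rintro ⟨_, h⟩; exact h
        · intro h; exact ⟨⟨x, Finset.mem_inter.mpr ⟨h x hxe, hxV⟩⟩, h⟩
      rw [heq]
      exact hedge2 e heE
    have hsum1 : ∑ f ∈ F, (E.filter (fun e => ∀ x ∈ e, x ∈ f)).card = 2 * E.card := by
      rw [hswap, Finset.sum_congr rfl hfiber, Finset.sum_const, smul_eq_mul, mul_comm]
    have hsum2 : ∑ f ∈ F, (if (f ∩ V0).card = 1 then 1 else 0) = F1.card := by
      rw [← Finset.card_filter]
      congr 1
      rw [hFdef, hF1def, Finset.filter_filter]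
      apply Finset.filter_congr
      intro f hf
      constructor
      · rintro ⟨_, h⟩; exact h
      · intro h; exact ⟨Finset.card_pos.mp (by omega), h⟩
    calc 2 * E.card + F1.card
        = (∑ f ∈ F, (E.filter (fun e => ∀ x ∈ e, x ∈ f)).card)
          + ∑ f ∈ F, (if (f ∩ V0).card = 1 then 1 else 0) := by rw [hsum1, hsum2]
      _ = ∑ f ∈ F, (((Finset.powersetCard 2 f).filter (fun s => (s ∩ V0).Nonempty)).card
          + ((Finset.powersetCard 2 f).filter (fun s => ¬ (s ∩ V0).Nonempty)).card) := by
          rw [← Finset.sum_add_distrib]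
          refine Finset.sum_congr rfl fun f hf => ?_
          rw [hcount1 f hf, hcount2 f hf]
      _ = ∑ f ∈ F, 3 := Finset.sum_congr rfl hcount
      _ = 3 * F.card := by rw [Finset.sum_const, smul_eq_mul, mul_comm]
  -- Final arithmetic
  have h1 : (F.card : ℤ) = F1.card + F2.card + F3.card := by exact_mod_cast hsplit
  have h2 : 2 * (E.card : ℤ) + F1.card = 3 * F.card := by exact_mod_cast hmain
  linarith
end
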